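/- arXiv:2109.13676 — 6 statements merged into one kernel-verified Lean document; each statement's English description precedes it below -/
import Mathlib

section
/- For any integers c with 1 ≤ c ≤ p-1 and j with 1 ≤ j ≤ c·p^(i-1), where p is prime and i ≥ 1, the p-adic valuation of the binomial coefficient (c·p^(i-1) choose j) equals i - 1 - v_p(j). -/
/-- For any integers `c` with `1 ≤ c ≤ p-1` and `j` with `1 ≤ j ≤ c·p^(i-1)`, where `p` is
prime and `i ≥ 1`, the `p`-adic valuation of `(c·p^(i-1)).choose j` equals `i - 1 - v_p(j)`. -/
theorem stmt_0 (p : ℕ) (hp : p.Prime) (i c j : ℕ) (hi : 1 ≤ i)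
    (hc1 : 1 ≤ c) (hc2 : c ≤ p - 1) (hj1 : 1 ≤ j) (hj2 : j ≤ c * p ^ (i - 1)) :
    (padicValNat p (Nat.choose (c * p ^ (i - 1)) j) : ℤ) =
      (i : ℤ) - 1 - padicValNat p j := by
  haveI : Fact p.Prime := ⟨hp⟩
  set k := i - 1 with hk
  set n := c * p ^ k with hn
  set v := padicValNat p j with hv
  have hp1 : 1 < p := hp.one_lt
  have hjne : j ≠ 0 := by omega
  have hnlt : n < p ^ (k + 1) := by
    calc n = c * p ^ k := rfl
    _ < p * p ^ k := by
        have hcp : c < p := by omega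
        exact Nat.mul_lt_mul_of_lt_of_le hcp (le_refl _) (by positivity)
    _ = p ^ (k + 1) := by ring
  have hlog : Nat.log p n < k + 1 := by
    rw [Nat.log_lt_iff_lt_pow hp1 (Nat.pos_iff_ne_zero.mp (Nat.mul_pos (by omega) (by positivity)))]
    exact hnlt
  have hvk : v ≤ k := by
    by_contra h
    have h1 : p ^ (k + 1) ∣ j := (padicValNat_dvd_iff_le hjne).2 (by omega)
    have := Nat.le_of_dvd (by omega) h1
    omega
  rw [padicValNat_choose hj2 hlog]
  have hfilter : Finset.filter (fun s => p ^ s ≤ j % p ^ s + (n - j) % p ^ s)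
      (Finset.Ico 1 (k + 1)) = Finset.Ico (v + 1) (k + 1) := by
    ext s
    simp only [Finset.mem_filter, Finset.mem_Ico]
    constructor
    · rintro ⟨⟨hs1, hs2⟩, hle⟩
      refine ⟨?_, hs2⟩
      by_contra h
      have hsv : s ≤ v := by omega
      have hdvd : p ^ s ∣ j := (padicValNat_dvd_iff_le hjne).2 hsv
      have hdn : p ^ s ∣ n := Dvd.dvd.mul_left (pow_dvd_pow p (by omega)) c
      have hdnj : p ^ s ∣ n - j := Nat.dvd_sub hdn hdvd
      have hq : 0 < p ^ s := by positivity
      have h1 : j % p ^ s = 0 := Nat.mod_eq_zero_of_dvd hdvd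
      have h2 : (n - j) % p ^ s = 0 := Nat.mod_eq_zero_of_dvd hdnj
      rw [h1, h2] at hle
      have : 0 < p ^ s := by positivity
      omega
    · rintro ⟨hs1, hs2⟩
      refine ⟨⟨by omega, hs2⟩, ?_⟩
      have hndvd : ¬ p ^ s ∣ j := by
        rw [padicValNat_dvd_iff_le hjne]; omega
      have hjm : j % p ^ s ≠ 0 := fun h => hndvd (Nat.dvd_of_mod_eq_zero h)
      have hdn : p ^ s ∣ n := Dvd.dvd.mul_left (pow_dvd_pow p (by omega)) c
      have hq : 0 < p ^ s := by positivity
      have hsum : (j % p ^ s + (n - j) % p ^ s) % p ^ s = 0 := by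
        rw [← Nat.add_mod, Nat.add_sub_cancel' hj2]
        exact Nat.mod_eq_zero_of_dvd hdn
      have hdsum : p ^ s ∣ j % p ^ s + (n - j) % p ^ s := Nat.dvd_of_mod_eq_zero hsum
      refine Nat.le_of_dvd ?_ hdsum
      exact Nat.lt_of_lt_of_le (Nat.pos_of_ne_zero hjm) (Nat.le_add_right _ _)
  rw [hfilter, Nat.card_Ico]
  have : k + 1 - (v + 1) = k - v := by omega
  rw [this]
  push_cast [Nat.cast_sub hvk]
  omega
end

section
/- For the polynomial 1 - φ_i(T)/p, one has v_p(1 - φ_i(T)/p, 1/(p^i - p^(i-1))) = 0, and for every l ≥ 1, v_p(1 - φ_i(T)/p, 1/(p^l - p^(l-1))) > i - l - 1. -/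
open Polynomial

/-- `φ_i(T) = 1 + (1+T)^(p^(i-1)) + ⋯ + (1+T)^((p-1)p^(i-1))`. -/
noncomputable def phiPoly (p i : ℕ) : Polynomial ℚ :=
  ∑ c ∈ Finset.range p, (1 + Polynomial.X) ^ (c * p ^ (i - 1))

/-- The Gauss valuation `v_p(f, s) = inf_j (v_p(a_j) + j·s)`. -/
noncomputable def gaussVal (p : ℕ) (f : Polynomial ℚ) (s : ℝ) : ℝ :=
  sInf {v : ℝ | ∃ j ∈ f.support, v = (padicValRat p (f.coeff j) : ℝ) + (j : ℝ) * s}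

/-!
Write `1 - φ_i/p = -∑_{j ≥ 1} (N_j / p) T^j` with `N_j = ∑_c binom(c p^(i-1), j)`; the constant
term cancels because `N_0 = p`. Modulo `p`, `(1+T)^(p^(i-1)) = 1 + T^(p^(i-1))` turns `φ_i` into a
geometric sum equal to `T^φ(p^i)`, so `p ∣ N_j` for every `j` except `N_{φ(p^i)} = 1`: at slope
`1/φ(p^i)` all terms of the Gauss valuation are `≥ 0` and the top one is `0`.
For general `l`, `j · binom(n, j) = n · binom(n-1, j-1)` gives `p^(i-1-v_p(j)) ∣ N_j`, and since
`j ≥ p^(v_p(j))` the bound reduces to `(k - l + 1)(p^l - p^(l-1)) < p^k`, which is Bernoulli's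
inequality.
-/

open Finset

section GaussVal

variable {p : ℕ} {f : ℚ[X]}

lemma gaussVal_eq_sInf_image (s : ℝ) :
    gaussVal p f s =
      sInf ((fun j : ℕ => (padicValRat p (f.coeff j) : ℝ) + j * s) '' f.support) := by
  rw [gaussVal]
  congr 1
  ext v
  simp [eq_comm]

lemma gaussVal_le_of_mem_support {j : ℕ} (hj : j ∈ f.support) (s : ℝ) :
    gaussVal p f s ≤ padicValRat p (f.coeff j) + j * s := by
  rw [gaussVal_eq_sInf_image]
  exact csInf_le ((f.support.finite_toSet.image _).bddBelow) (Set.mem_image_of_mem _ hj)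

lemma exists_mem_support_gaussVal_eq (hf : f.support.Nonempty) (s : ℝ) :
    ∃ j ∈ f.support, gaussVal p f s = padicValRat p (f.coeff j) + j * s := by
  rw [gaussVal_eq_sInf_image]
  obtain ⟨j, hj, hmin⟩ :=
    ((coe_nonempty.2 hf).image fun j : ℕ => (padicValRat p (f.coeff j) : ℝ) + j * s).csInf_mem
      (f.support.finite_toSet.image _)
  exact ⟨j, hj, hmin.symm⟩

end GaussVal

theorem sum_range_one_add_X_pow_mul_pow {R : Type*} [CommRing R] (p : ℕ) [ExpChar R p]
    (n : ℕ) : ∑ c ∈ range p, (1 + X : R[X]) ^ (c * p ^ n) = X ^ ((p - 1) * p ^ n) := by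
  set q := p ^ n
  have hfrob : ∀ c, (1 + X : R[X]) ^ (c * q) = (1 + X ^ q) ^ c := fun c => by
    rw [mul_comm, pow_mul, add_pow_expChar_pow, one_pow]
  apply (isRegular_X_pow q).right
  calc (∑ c ∈ range p, (1 + X : R[X]) ^ (c * q)) * X ^ q
      = (∑ c ∈ range p, (1 + X ^ q : R[X]) ^ c) * ((1 + X ^ q) - 1) := by
        simp only [hfrob, add_sub_cancel_left]
    _ = (1 + X ^ q) ^ p - 1 := geom_sum_mul _ _
    _ = X ^ ((p - 1) * q) * X ^ q := by
      rw [add_pow_expChar, one_pow, add_sub_cancel_left, ← pow_mul, ← pow_add, ← add_one_mul,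
        Nat.sub_one_add_one (expChar_pos R p).ne', mul_comm]

theorem Nat.pow_sub_padicValNat_dvd_choose {p n a j : ℕ} [Fact p.Prime] (hn : p ^ a ∣ n)
    (hj : j ≠ 0) : p ^ (a - padicValNat p j) ∣ n.choose j := by
  rcases eq_or_ne (n.choose j) 0 with h | h
  · simp [h]
  obtain ⟨k, rfl⟩ := Nat.exists_eq_add_one_of_ne_zero hj
  have hn0 : n ≠ 0 := by
    rintro rfl
    simp at h
  obtain ⟨m, rfl⟩ := Nat.exists_eq_add_one_of_ne_zero hn0
  have hdvd : p ^ a ∣ (m + 1).choose (k + 1) * (k + 1) :=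
    Nat.add_one_mul_choose_eq m k ▸ hn.mul_right _
  have hle := (padicValNat_dvd_iff_le (mul_ne_zero h hj)).mp hdvd
  rw [padicValNat.mul h hj] at hle
  exact (padicValNat_dvd_iff_le h).mpr (by omega)

theorem Nat.cast_sub_one_mul_pow_sub_one {p l : ℕ} (hp : 1 ≤ p) (hl : 1 ≤ l) :
    (((p - 1) * p ^ (l - 1) : ℕ) : ℝ) = (p : ℝ) ^ l - (p : ℝ) ^ (l - 1) := by
  obtain ⟨n, rfl⟩ := Nat.exists_eq_add_of_le' hl
  push_cast [Nat.cast_sub hp]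
  ring

theorem sub_mul_pow_succ_sub_pow_lt_pow {x : ℝ} (hx : 1 ≤ x) (k n : ℕ) :
    ((k : ℝ) - n) * (x ^ (n + 1) - x ^ n) < x ^ k := by
  rcases le_or_gt k n with hkn | hnk
  · have : ((k : ℝ) - n) ≤ 0 := by simp [hkn]
    calc ((k : ℝ) - n) * (x ^ (n + 1) - x ^ n)
        ≤ 0 := mul_nonpos_of_nonpos_of_nonneg this (sub_nonneg.2 (pow_le_pow_right₀ hx n.le_succ))
      _ < x ^ k := by positivity
  · obtain ⟨m, rfl⟩ := Nat.exists_eq_add_of_lt hnk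
    have hbern : 1 + ((m + 1 : ℕ) : ℝ) * (x - 1) ≤ x ^ (m + 1) := by
      simpa using one_add_mul_le_pow (a := x - 1) (by linarith) (m + 1)
    have hxn : 0 < x ^ n := by positivity
    rw [pow_add, pow_succ, show n + m + 1 = n + (m + 1) by ring, pow_add]
    push_cast at hbern ⊢
    nlinarith

def phiCoeff (p i j : ℕ) : ℕ := ∑ c ∈ range p, (c * p ^ (i - 1)).choose j

section PhiCoeff

variable {p : ℕ} (i : ℕ)

lemma coeff_phiPoly (j : ℕ) : (phiPoly p i).coeff j = phiCoeff p i j := by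
  simp [phiPoly, phiCoeff, coeff_one_add_X_pow]

lemma phiCoeff_zero : phiCoeff p i 0 = p := by
  simp [phiCoeff]

lemma phiCoeff_sub_one_mul_pow (hp : 1 ≤ p) : phiCoeff p i ((p - 1) * p ^ (i - 1)) = 1 := by
  rw [phiCoeff, sum_eq_single_of_mem (p - 1) (mem_range.2 (by omega))]
  · simp
  · intro c hc hne
    refine Nat.choose_eq_zero_of_lt (Nat.mul_lt_mul_of_pos_right ?_ (by positivity))
    rw [mem_range] at hc
    omega

variable [Fact p.Prime]

lemma prime_dvd_phiCoeff {j : ℕ} (hj : j ≠ (p - 1) * p ^ (i - 1)) : p ∣ phiCoeff p i j := by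
  rw [← ZMod.natCast_eq_zero_iff]
  have := congrArg (coeff · j) (sum_range_one_add_X_pow_mul_pow (R := ZMod p) p (i - 1))
  simpa [finsetSum_coeff, coeff_one_add_X_pow, coeff_X_pow, hj, phiCoeff] using this

lemma pow_sub_padicValNat_dvd_phiCoeff {j : ℕ} (hj : j ≠ 0) :
    p ^ (i - 1 - padicValNat p j) ∣ phiCoeff p i j :=
  dvd_sum fun _ _ => Nat.pow_sub_padicValNat_dvd_choose (dvd_mul_left _ _) hj

end PhiCoeff

section OneSubPhiPoly

variable {p : ℕ} (i : ℕ)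

lemma coeff_one_sub_C_mul_phiPoly (hp : p ≠ 0) (j : ℕ) :
    (1 - C (1 / (p : ℚ)) * phiPoly p i).coeff j =
      if j = 0 then 0 else -((phiCoeff p i j : ℚ) / p) := by
  rw [coeff_sub, coeff_one, coeff_C_mul, coeff_phiPoly]
  split_ifs with hj
  · simp [hj, phiCoeff_zero, hp]
  · ring

lemma mem_support_one_sub_C_mul_phiPoly_iff (hp : p ≠ 0) {j : ℕ} :
    j ∈ (1 - C (1 / (p : ℚ)) * phiPoly p i).support ↔ j ≠ 0 ∧ phiCoeff p i j ≠ 0 := by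
  rw [mem_support_iff, coeff_one_sub_C_mul_phiPoly i hp]
  split_ifs with hj <;> simp [hj, hp]

variable [Fact p.Prime]

lemma padicValRat_coeff_one_sub_C_mul_phiPoly {j : ℕ}
    (hj : j ∈ (1 - C (1 / (p : ℚ)) * phiPoly p i).support) :
    padicValRat p ((1 - C (1 / (p : ℚ)) * phiPoly p i).coeff j) =
      padicValNat p (phiCoeff p i j) - 1 := by
  have hp : p ≠ 0 := (Fact.out : p.Prime).ne_zero
  obtain ⟨hj0, hc⟩ := (mem_support_one_sub_C_mul_phiPoly_iff i hp).1 hj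
  rw [coeff_one_sub_C_mul_phiPoly i hp, if_neg hj0, padicValRat.neg,
    padicValRat.div (by exact_mod_cast hc) (by exact_mod_cast hp), padicValRat.of_nat,
    padicValRat.self (Fact.out : p.Prime).one_lt]

lemma sub_one_mul_pow_mem_support_one_sub_C_mul_phiPoly :
    (p - 1) * p ^ (i - 1) ∈ (1 - C (1 / (p : ℚ)) * phiPoly p i).support := by
  have hp := (Fact.out : p.Prime).one_lt
  rw [mem_support_one_sub_C_mul_phiPoly_iff i (by omega), phiCoeff_sub_one_mul_pow i hp.le]
  exact ⟨(Nat.mul_pos (by omega) (by positivity)).ne', one_ne_zero⟩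

end OneSubPhiPoly

section GaussValOneSubPhiPoly

variable {p : ℕ} [Fact p.Prime] {i : ℕ}

theorem gaussVal_one_sub_C_mul_phiPoly_eq_zero (hi : 1 ≤ i) :
    gaussVal p (1 - C (1 / (p : ℚ)) * phiPoly p i)
      (1 / ((p : ℝ) ^ i - (p : ℝ) ^ (i - 1))) = 0 := by
  have hp := (Fact.out : p.Prime).one_lt
  set D := (p - 1) * p ^ (i - 1)
  have hD := sub_one_mul_pow_mem_support_one_sub_C_mul_phiPoly (p := p) i
  have hD0 : (D : ℝ) ≠ 0 := by exact_mod_cast Nat.mul_ne_zero (by omega) (by positivity)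
  rw [← Nat.cast_sub_one_mul_pow_sub_one hp.le hi]
  have hterm_D : (padicValRat p ((1 - C (1 / (p : ℚ)) * phiPoly p i).coeff D) : ℝ) +
      D * (1 / D) = 0 := by
    rw [padicValRat_coeff_one_sub_C_mul_phiPoly i hD, phiCoeff_sub_one_mul_pow i hp.le,
      mul_one_div_cancel hD0]
    simp
  obtain ⟨j, hj, hval⟩ := exists_mem_support_gaussVal_eq ⟨_, hD⟩ _
  refine le_antisymm (hterm_D ▸ gaussVal_le_of_mem_support hD _) (hval ▸ ?_)
  rcases eq_or_ne j D with rfl | hjD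
  · exact hterm_D.ge
  have hc := ((mem_support_one_sub_C_mul_phiPoly_iff i (by omega)).1 hj).2
  have hv := one_le_padicValNat_of_dvd hc (prime_dvd_phiCoeff i hjD)
  rw [padicValRat_coeff_one_sub_C_mul_phiPoly i hj]
  have hslope : (0 : ℝ) ≤ j * (1 / D) := by positivity
  rw [Int.cast_sub, Int.cast_natCast, Int.cast_one]
  linarith [(by exact_mod_cast hv : (1 : ℝ) ≤ padicValNat p (phiCoeff p i j))]

theorem lt_gaussVal_one_sub_C_mul_phiPoly {l : ℕ} (hl : 1 ≤ l) :
    (i : ℝ) - l - 1 <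
      gaussVal p (1 - C (1 / (p : ℚ)) * phiPoly p i) (1 / ((p : ℝ) ^ l - (p : ℝ) ^ (l - 1))) := by
  have hp := (Fact.out : p.Prime).one_lt
  have hD := sub_one_mul_pow_mem_support_one_sub_C_mul_phiPoly (p := p) i
  obtain ⟨j, hj, hval⟩ := exists_mem_support_gaussVal_eq (p := p) ⟨_, hD⟩
    (1 / ((p : ℝ) ^ l - (p : ℝ) ^ (l - 1)))
  obtain ⟨hj0, hc⟩ := (mem_support_one_sub_C_mul_phiPoly_iff i (by omega)).1 hj
  set k := padicValNat p j
  have hv : (i : ℝ) ≤ padicValNat p (phiCoeff p i j) + k + 1 := by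
    have := (padicValNat_dvd_iff_le hc).1 (pow_sub_padicValNat_dvd_phiCoeff i hj0)
    exact_mod_cast (by omega : i ≤ padicValNat p (phiCoeff p i j) + k + 1)
  have hpk : (p : ℝ) ^ k ≤ j := by
    exact_mod_cast Nat.le_of_dvd (Nat.pos_of_ne_zero hj0) pow_padicValNat_dvd
  have hE : 0 < (p : ℝ) ^ l - (p : ℝ) ^ (l - 1) := by
    rw [← Nat.cast_sub_one_mul_pow_sub_one hp.le hl]
    exact_mod_cast Nat.mul_pos (by omega) (by positivity)
  have hlt := sub_mul_pow_succ_sub_pow_lt_pow (x := p) (by exact_mod_cast hp.le) k (l - 1)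
  rw [Nat.sub_add_cancel hl, Nat.cast_sub hl, Nat.cast_one] at hlt
  have hjE : (k : ℝ) - (l - 1) < j * (1 / ((p : ℝ) ^ l - (p : ℝ) ^ (l - 1))) := by
    rw [mul_one_div, lt_div_iff₀ hE]
    linarith
  rw [hval, padicValRat_coeff_one_sub_C_mul_phiPoly i hj, Int.cast_sub, Int.cast_natCast,
    Int.cast_one]
  linarith

end GaussValOneSubPhiPoly

theorem stmt_2_general (p i : ℕ) (hp : p.Prime) (hi : 1 ≤ i) :
    gaussVal p (1 - Polynomial.C (1 / (p : ℚ)) * phiPoly p i)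
        (1 / ((p : ℝ) ^ i - (p : ℝ) ^ (i - 1))) = 0 ∧
    ∀ l : ℕ, 1 ≤ l →
      (i : ℝ) - (l : ℝ) - 1 <
        gaussVal p (1 - Polynomial.C (1 / (p : ℚ)) * phiPoly p i)
          (1 / ((p : ℝ) ^ l - (p : ℝ) ^ (l - 1))) := by
  have : Fact p.Prime := ⟨hp⟩
  exact ⟨gaussVal_one_sub_C_mul_phiPoly_eq_zero hi, fun _ => lt_gaussVal_one_sub_C_mul_phiPoly⟩

/-- For the polynomial `1 - φ_i(T)/p`, one has `v_p(1 - φ_i/p, 1/φ(p^i)) = 0`, and for every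
`l ≥ 1`, `v_p(1 - φ_i/p, 1/φ(p^l)) > i - l - 1`, where `φ(p^l) = p^l - p^(l-1)`. -/
theorem stmt_2 (p i : ℕ) (hp : p.Prime) (hodd : Odd p) (hi : 1 ≤ i) :
    gaussVal p (1 - Polynomial.C (1 / (p : ℚ)) * phiPoly p i)
        (1 / ((p : ℝ) ^ i - (p : ℝ) ^ (i - 1))) = 0 ∧
    ∀ l : ℕ, 1 ≤ l →
      (i : ℝ) - (l : ℝ) - 1 <
        gaussVal p (1 - Polynomial.C (1 / (p : ℚ)) * phiPoly p i)
          (1 / ((p : ℝ) ^ l - (p : ℝ) ^ (l - 1))) :=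
  stmt_2_general p i hp hi
end

section
/- Writing φ_i(T) - p = a_1 T + a_2 T^2 + ... + a_{φ(p^i)} T^{φ(p^i)}, each coefficient satisfies a_j = Σ_{c=1}^{p-1} (c·p^(i-1) choose j), and consequently v_p(a_j) ≥ i - 1 - v_p(j) for all 1 ≤ j ≤ φ(p^i). -/
open Polynomial

lemma key_dvd (p i j c : ℕ) (hp : p.Prime) (hj1 : 1 ≤ j) (hc : 1 ≤ c) :
    p ^ (i - 1 - padicValNat p j) ∣ Nat.choose (c * p ^ (i - 1)) j := by
  haveI : Fact p.Prime := ⟨hp⟩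
  set n := c * p ^ (i - 1) with hn
  set e := padicValNat p j with he
  rcases Nat.eq_zero_or_pos (Nat.choose n j) with h0 | hpos
  · simp [h0]
  have hid : n * Nat.choose (n - 1) (j - 1) = Nat.choose n j * j := by
    have hn1 : 1 ≤ n := Nat.mul_pos hc (pow_pos hp.pos _)
    have := Nat.add_one_mul_choose_eq (n - 1) (j - 1)
    simpa only [Nat.succ_eq_add_one, Nat.sub_add_cancel hn1, Nat.sub_add_cancel hj1] using this
  have hdvd : p ^ (i - 1) ∣ Nat.choose n j * j := by
    rw [← hid]
    exact Dvd.dvd.mul_right (Dvd.dvd.mul_left dvd_rfl c) _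
  have hle : i - 1 ≤ padicValNat p (Nat.choose n j * j) :=
    (padicValNat_dvd_iff_le (Nat.mul_ne_zero hpos.ne' (by omega))).mp hdvd
  rw [padicValNat.mul hpos.ne' (by omega)] at hle
  rw [padicValNat_dvd_iff_le hpos.ne']
  omega

/-- Writing `φ_i(T) - p = a_1 T + ⋯ + a_{φ(p^i)} T^{φ(p^i)}`, each coefficient satisfies
`a_j = Σ_{c=1}^{p-1} (c·p^(i-1) choose j)`, and consequently `v_p(a_j) ≥ i - 1 - v_p(j)`
for all `1 ≤ j ≤ φ(p^i)`. -/
theorem stmt_3 (p i : ℕ) (hp : p.Prime) (hodd : Odd p) (hi : 1 ≤ i) :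
    ∀ j : ℕ, 1 ≤ j → j ≤ p ^ (i - 1) * (p - 1) →
      (phiPoly p i - Polynomial.C (p : ℚ)).coeff j =
        ∑ c ∈ Finset.Icc 1 (p - 1), (Nat.choose (c * p ^ (i - 1)) j : ℚ) ∧
      (i : ℤ) - 1 - (padicValNat p j : ℤ) ≤
        padicValRat p ((phiPoly p i - Polynomial.C (p : ℚ)).coeff j) := by
  haveI : Fact p.Prime := ⟨hp⟩
  intro j hj1 hj2
  have hp2 : 2 ≤ p := hp.two_le
  have hrange : Finset.range p = insert 0 (Finset.Icc 1 (p - 1)) := by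
    ext x; simp [Finset.mem_range, Finset.mem_Icc]; omega
  have hcoeff : (phiPoly p i - Polynomial.C (p : ℚ)).coeff j =
      ∑ c ∈ Finset.Icc 1 (p - 1), (Nat.choose (c * p ^ (i - 1)) j : ℚ) := by
    rw [Polynomial.coeff_sub, Polynomial.coeff_C, if_neg (by omega), sub_zero, phiPoly,
      Polynomial.finset_sum_coeff, hrange,
      Finset.sum_insert (by simp)]
    simp only [Polynomial.coeff_one_add_X_pow]
    rw [Nat.zero_mul, Nat.choose_eq_zero_of_lt (by omega)]
    simp
  refine ⟨hcoeff, ?_⟩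
  set N : ℕ := ∑ c ∈ Finset.Icc 1 (p - 1), Nat.choose (c * p ^ (i - 1)) j with hN
  have hcast : (phiPoly p i - Polynomial.C (p : ℚ)).coeff j = (N : ℚ) := by
    rw [hcoeff, hN, Nat.cast_sum]
  have hNpos : 0 < N := by
    have hmem : p - 1 ∈ Finset.Icc 1 (p - 1) := by simp; omega
    have : 0 < Nat.choose ((p - 1) * p ^ (i - 1)) j :=
      Nat.choose_pos (by rw [mul_comm]; exact hj2)
    calc 0 < Nat.choose ((p - 1) * p ^ (i - 1)) j := this
      _ ≤ N := Finset.single_le_sum (f := fun c => Nat.choose (c * p ^ (i - 1)) j) (fun _ _ => Nat.zero_le _) hmem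
  have hdvdN : p ^ (i - 1 - padicValNat p j) ∣ N :=
    Finset.dvd_sum fun c hc => key_dvd p i j c hp hj1 (Finset.mem_Icc.mp hc).1
  have hle : i - 1 - padicValNat p j ≤ padicValNat p N :=
    (padicValNat_dvd_iff_le hNpos.ne').mp hdvdN
  rw [hcast, ← padicValRat_of_nat]
  omega
end

section
/- Let f_1 = S_1 - p^r and f_2 = S_2 - c be elements of the Tate algebra A = Q_p⟨S_1, S_2, Q_1⟩, for constants p^r and c in Q_p. Then f_1 is not a zero divisor in the quotient ring A/(f_2 - Q_1 f_1). -/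
/-- An element of `MvPowerSeries (Fin 3) ℚ_p` lies in the Tate algebra `ℚ_p⟨S_1,S_2,Q_1⟩`
iff its coefficients tend to `0`. -/
def IsTate3 (p : ℕ) [Fact p.Prime] (f : MvPowerSeries (Fin 3) ℚ_[p]) : Prop :=
  Filter.Tendsto (fun d => MvPowerSeries.coeff (R := ℚ_[p]) d f) Filter.cofinite (nhds 0)

namespace Stmt8Aux

open MvPowerSeries Filter Finsupp

abbrev M3 := Fin 3 →₀ ℕ

noncomputable section

def E0 : M3 := Finsupp.single 0 1
def E1 : M3 := Finsupp.single 1 1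
def E2 : M3 := Finsupp.single 2 1
def S02 : M3 := E0 + E2

@[simp] lemma E0_apply (i : Fin 3) : E0 i = if i = 0 then 1 else 0 := by
  simp [E0, Finsupp.single_apply, eq_comm]
@[simp] lemma E1_apply (i : Fin 3) : E1 i = if i = 1 then 1 else 0 := by
  simp [E1, Finsupp.single_apply, eq_comm]
@[simp] lemma E2_apply (i : Fin 3) : E2 i = if i = 2 then 1 else 0 := by
  simp [E2, Finsupp.single_apply, eq_comm]
@[simp] lemma S02_apply (i : Fin 3) : S02 i = if i = 0 then 1 else if i = 2 then 1 else 0 := by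
  fin_cases i <;> simp [S02]

lemma le_iff3 (a b : M3) : a ≤ b ↔ a 0 ≤ b 0 ∧ a 1 ≤ b 1 ∧ a 2 ≤ b 2 := by
  rw [Finsupp.le_def]
  constructor
  · intro h; exact ⟨h 0, h 1, h 2⟩
  · rintro ⟨h0, h1, h2⟩ i; fin_cases i <;> assumption

lemma ext3 {a b : M3} (h0 : a 0 = b 0) (h1 : a 1 = b 1) (h2 : a 2 = b 2) : a = b := by
  ext i; fin_cases i <;> assumption

@[simp] lemma add_apply3 (a b : M3) (i : Fin 3) : (a + b) i = a i + b i := rfl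
@[simp] lemma sub_apply3 (a b : M3) (i : Fin 3) : (a - b) i = a i - b i := Finsupp.tsub_apply a b i
@[simp] lemma smul_apply3 (k : ℕ) (a : M3) (i : Fin 3) : (k • a) i = k * a i := rfl

-- monomial arithmetic helpers
lemma addE1_smul (x : M3) (j : ℕ) : x + E1 + j • E1 = x + (j+1) • E1 := by
  apply ext3 <;> simp <;> ring

lemma le_add_smulE1 {m : M3} (hm : m 1 = 0) (d : M3) (k : ℕ) :
    m ≤ d + k • E1 ↔ m ≤ d := by
  rw [le_iff3, le_iff3]
  simp [hm]

lemma sub_add_smulE1 {m : M3} (hm : m 1 = 0) (d : M3) (k : ℕ) :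
    d + k • E1 - m = (d - m) + k • E1 := by
  apply ext3 <;> simp [hm] <;> omega

lemma sub_E1_apply1 (d : M3) : (d - E1) 1 = d 1 - 1 := by simp


variable {p : ℕ} [Fact p.Prime]

local notation "K" => ℚ_[p]
local notation "PS" => MvPowerSeries (Fin 3) ℚ_[p]
local notation "cf" => MvPowerSeries.coeff (R := ℚ_[p])

lemma cf_apply (f : PS) (d : M3) : cf d f = f d := rfl

/-- working form of Tate condition -/
def TateB (f : PS) : Prop := ∀ ε : ℝ, 0 < ε → {d : M3 | ε < ‖cf d f‖}.Finite

lemma isTate3_iff_tateB (f : PS) : IsTate3 p f ↔ TateB f := by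
  rw [IsTate3, NormedAddCommGroup.tendsto_nhds_zero]
  constructor
  · intro h ε hε
    have := h ε hε
    rw [Filter.eventually_cofinite] at this
    exact this.subset (fun d hd => by simp only [Set.mem_setOf_eq] at hd ⊢; push_neg; linarith)
  · intro h ε hε
    rw [Filter.eventually_cofinite]
    exact (h (ε/2) (by linarith)).subset
      (fun d hd => by simp only [Set.mem_setOf_eq, not_lt] at hd ⊢; linarith)

lemma TateB.finite_ge {f : PS} (hf : TateB f) {ε : ℝ} (hε : 0 < ε) :
    {d : M3 | ε ≤ ‖cf d f‖}.Finite :=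
  (hf (ε/2) (by linarith)).subset (fun d hd => by
    simp only [Set.mem_setOf_eq] at hd ⊢; linarith)

lemma TateB.bound {f : PS} (hf : TateB f) : ∃ M : ℝ, 0 < M ∧ ∀ d, ‖cf d f‖ ≤ M := by
  classical
  obtain hfin := hf 1 one_pos
  refine ⟨1 + ∑ d ∈ hfin.toFinset, ‖cf d f‖, by positivity, fun d => ?_⟩
  by_cases hd : d ∈ hfin.toFinset
  · have h1 : ‖cf d f‖ ≤ ∑ x ∈ hfin.toFinset, ‖cf x f‖ :=
      Finset.single_le_sum (f := fun x => ‖cf x f‖) (fun x _ => norm_nonneg _) hd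
    have h2 : (0:ℝ) ≤ 1 := zero_le_one
    linarith
  · have : ¬ (1:ℝ) < ‖cf d f‖ := by simpa using hd
    have hsum : (0:ℝ) ≤ ∑ x ∈ hfin.toFinset, ‖cf x f‖ :=
      Finset.sum_nonneg fun x _ => norm_nonneg _
    push_neg at this
    linarith

-- nonarch helpers
lemma norm_sum_le_max {α : Type*} (s : Finset α) (f : α → K) {M : ℝ} (hM : 0 ≤ M)
    (h : ∀ i ∈ s, ‖f i‖ ≤ M) : ‖∑ i ∈ s, f i‖ ≤ M :=
  IsUltrametricDist.norm_sum_le_of_forall_le_of_nonneg hM h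

lemma exists_lt_of_lt_norm_sum {α : Type*} {s : Finset α} {f : α → K} {ε : ℝ} (hε : 0 ≤ ε)
    (h : ε < ‖∑ i ∈ s, f i‖) : ∃ i ∈ s, ε < ‖f i‖ := by
  by_contra hno
  push_neg at hno
  exact absurd (norm_sum_le_max s f hε hno) (not_le.mpr h)

lemma exists_lt_of_lt_norm_tsum {f : ℕ → K} {ε : ℝ} (hε : 0 ≤ ε)
    (h : ε < ‖∑' i, f i‖) : ∃ i, ε < ‖f i‖ := by
  by_contra hno
  push_neg at hno
  exact absurd (IsUltrametricDist.norm_tsum_le_of_forall_le_of_nonneg hε hno) (not_le.mpr h)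


variable (p) in
/-- `e = c + Q1*(S1 - p^r)`; the divisor is `X 1 - e`. -/
def eS (r : ℕ) (c : K) : PS :=
  MvPowerSeries.C (σ := Fin 3) (R := K) c + MvPowerSeries.X 2 *
    (MvPowerSeries.X 0 - MvPowerSeries.C (σ := Fin 3) (R := K) ((p : K) ^ r))

variable {r : ℕ} {c : ℚ_[p]}

lemma eS_eq : eS p r c = MvPowerSeries.monomial (R := K) 0 c + MvPowerSeries.monomial (R := K) S02 1
    - MvPowerSeries.monomial (R := K) E2 ((p : K)^r) := by
  have h1 : (MvPowerSeries.X 2 : PS) = MvPowerSeries.monomial (R := K) E2 1 := rfl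
  have h0 : (MvPowerSeries.X 0 : PS) = MvPowerSeries.monomial (R := K) E0 1 := rfl
  have hC : (MvPowerSeries.C (σ := Fin 3) (R := K) ((p : K)^r)) = MvPowerSeries.monomial (R := K) 0 ((p:K)^r) := rfl
  have hCc : (MvPowerSeries.C (σ := Fin 3) (R := K) c) = MvPowerSeries.monomial (R := K) 0 c := rfl
  rw [eS, h1, h0, hC, hCc, mul_sub, MvPowerSeries.monomial_mul_monomial,
    MvPowerSeries.monomial_mul_monomial]
  have : E2 + E0 = S02 := by apply ext3 <;> simp [S02]
  rw [this]
  ring_nf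

/-- the fundamental "sparse multiplication" identity for `e`. -/
lemma eS_mul_coeff (v : PS) (d : M3) :
    cf d (eS p r c * v) = c * v d + (if S02 ≤ d then v (d - S02) else 0)
      - (p:K)^r * (if E2 ≤ d then v (d - E2) else 0) := by
  rw [eS_eq, sub_mul, add_mul, map_sub, map_add,
    MvPowerSeries.coeff_monomial_mul, MvPowerSeries.coeff_monomial_mul,
    MvPowerSeries.coeff_monomial_mul]
  simp only [zero_le, if_true, tsub_zero, one_mul, mul_ite, mul_zero]
  rfl

lemma eS_mul_coeff' (v : PS) (d : M3) :
    cf d (eS p r c * v) = c * cf d v + (if S02 ≤ d then cf (d - S02) v else 0)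
      - (p:K)^r * (if E2 ≤ d then cf (d - E2) v else 0) := eS_mul_coeff v d

lemma norm_p_pow_le_one : ‖((p:K))^r‖ ≤ 1 := by
  rw [norm_pow]
  exact pow_le_one₀ (norm_nonneg _) Padic.norm_p_lt_one.le

/-- support bound for powers of `e` -/
lemma eS_pow_support {j : ℕ} {d : M3} (h : cf d ((eS p r c)^j) ≠ 0) : d ≤ j • S02 := by
  classical
  induction j generalizing d with
  | zero =>
    rw [pow_zero] at h
    have : d = 0 := by
      by_contra hd
      rw [MvPowerSeries.coeff_one, if_neg hd] at h
      exact h rfl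
    simp [this]
  | succ n ih =>
    rw [pow_succ, MvPowerSeries.coeff_mul] at h
    obtain ⟨q, hq, hne⟩ := Finset.exists_ne_zero_of_sum_ne_zero h
    have h1 : cf q.1 ((eS p r c)^n) ≠ 0 := left_ne_zero_of_mul hne
    have h2 : cf q.2 (eS p r c) ≠ 0 := right_ne_zero_of_mul hne
    have hq1 : q.1 ≤ n • S02 := ih h1
    have hq2 : q.2 ≤ S02 := by
      rw [eS_eq] at h2
      simp only [map_sub, map_add, MvPowerSeries.coeff_monomial] at h2
      by_contra hc2
      have hne0 : q.2 ≠ 0 := fun h => hc2 (le_of_eq_of_le h zero_le)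
      have hneS : q.2 ≠ S02 := fun h => hc2 h.le
      have hE2S : E2 ≤ S02 := by rw [le_iff3]; simp
      have hneE : q.2 ≠ E2 := fun h => hc2 (le_of_eq_of_le h hE2S)
      rw [if_neg hne0, if_neg hneS, if_neg hneE] at h2
      simp at h2
    have := Finset.HasAntidiagonal.mem_antidiagonal.mp hq
    calc d = q.1 + q.2 := this.symm
      _ ≤ n • S02 + S02 := add_le_add hq1 hq2
      _ = (n+1) • S02 := (succ_nsmul S02 n).symm

lemma eS_pow_fst_eq_zero {j : ℕ} {d : M3} (h : cf d ((eS p r c)^j) ≠ 0) : d 1 = 0 := by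
  have := (le_iff3 _ _).mp (eS_pow_support h)
  simpa using this.2.1

lemma eS_norm_coeff_le (hc : ‖c‖ ≤ 1) (d : M3) : ‖cf d (eS p r c)‖ ≤ 1 := by
  rw [eS_eq]
  simp only [map_sub, map_add, MvPowerSeries.coeff_monomial]
  have h1 : ‖(if d = 0 then c else 0)‖ ≤ 1 := by split_ifs <;> simp [hc]
  have h2 : ‖(if d = S02 then (1:ℚ_[p]) else 0)‖ ≤ 1 := by split_ifs <;> simp
  have h3 : ‖(if d = E2 then ((p:ℚ_[p]))^r else 0)‖ ≤ 1 := by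
    split_ifs with h
    · exact norm_p_pow_le_one
    · simp
  rw [sub_eq_add_neg]
  refine le_trans (Padic.nonarchimedean _ _)
    (max_le (le_trans (Padic.nonarchimedean _ _) (max_le h1 h2)) ?_)
  rwa [norm_neg]

lemma eS_pow_norm_le (hc : ‖c‖ ≤ 1) (j : ℕ) (d : M3) : ‖cf d ((eS p r c)^j)‖ ≤ 1 := by
  classical
  induction j generalizing d with
  | zero =>
    rw [pow_zero, MvPowerSeries.coeff_one]
    split_ifs <;> simp
  | succ n ih =>
    rw [pow_succ, MvPowerSeries.coeff_mul]
    refine norm_sum_le_max _ _ zero_le_one fun q _ => ?_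
    rw [norm_mul]
    calc ‖cf q.1 ((eS p r c)^n)‖ * ‖cf q.2 (eS p r c)‖ ≤ 1 * 1 :=
        mul_le_mul (ih _) (eS_norm_coeff_le hc _) (norm_nonneg _) zero_le_one
      _ = 1 := one_mul 1


-- specialized E1 helpers
lemma le_addE1 {m : M3} (hm : m 1 = 0) (d : M3) : m ≤ d + E1 ↔ m ≤ d := by
  simpa using le_add_smulE1 hm d 1

lemma sub_addE1 {m : M3} (hm : m 1 = 0) (d : M3) : d + E1 - m = (d - m) + E1 := by
  simpa using sub_add_smulE1 hm d 1

lemma S02_fst : S02 1 = 0 := by simp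
lemma E2_fst : E2 1 = 0 := by simp
lemma E0_fst : E0 1 = 0 := by simp

lemma X1_eq : (MvPowerSeries.X 1 : PS) = MvPowerSeries.monomial (R := K) E1 1 := rfl

lemma X1_mul_coeff (v : PS) (d : M3) :
    cf d (MvPowerSeries.X 1 * v) = if E1 ≤ d then v (d - E1) else 0 := by
  rw [X1_eq, MvPowerSeries.coeff_monomial_mul]
  simp only [one_mul]
  rfl

def f1S (p : ℕ) [Fact p.Prime] (r : ℕ) : MvPowerSeries (Fin 3) ℚ_[p] :=
  MvPowerSeries.X 0 - MvPowerSeries.C (σ := Fin 3) (R := ℚ_[p]) ((p : ℚ_[p])^r)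

lemma f1S_eq : f1S p r = MvPowerSeries.monomial (R := K) E0 1
    - MvPowerSeries.monomial (R := K) 0 ((p : K)^r) := rfl

lemma f1S_mul_coeff (v : PS) (d : M3) :
    cf d (f1S p r * v) = (if E0 ≤ d then v (d - E0) else 0) - (p:K)^r * v d := by
  rw [f1S_eq, sub_mul, map_sub, MvPowerSeries.coeff_monomial_mul,
    MvPowerSeries.coeff_monomial_mul]
  simp only [zero_le, if_true, tsub_zero, one_mul]
  rfl

lemma f1S_ne_zero : f1S p r ≠ 0 := by
  intro h
  have h1 : cf E0 (f1S p r) = 1 := by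
    rw [f1S_eq, map_sub, MvPowerSeries.coeff_monomial, MvPowerSeries.coeff_monomial]
    have hE0 : E0 ≠ 0 := by
      intro hE
      have := DFunLike.congr_fun hE 0
      simp at this
    rw [if_pos rfl, if_neg hE0, sub_zero]
  rw [h, map_zero] at h1
  exact zero_ne_one h1

section CaseA

variable (g : MvPowerSeries (Fin 3) ℚ_[p])

/-- coefficients of the Weierstrass quotient -/
def bA (r : ℕ) (c : ℚ_[p]) (j : ℕ) (x : M3) : ℚ_[p] :=
  cf (x + j • E1) ((eS p r c)^j * g)

lemma bA_zero (x : M3) : bA g r c 0 x = cf x g := by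
  rw [bA, zero_smul, add_zero, pow_zero, one_mul]

lemma bA_succ (j : ℕ) (d : M3) :
    bA g r c (j+1) d = c * bA g r c j (d + E1)
      + (if S02 ≤ d then bA g r c j ((d - S02) + E1) else 0)
      - (p:K)^r * (if E2 ≤ d then bA g r c j ((d - E2) + E1) else 0) := by
  have h1 : bA g r c (j+1) d = cf (d + (j+1) • E1) (eS p r c * ((eS p r c)^j * g)) := by
    rw [bA, pow_succ', mul_assoc]
  rw [h1, eS_mul_coeff]
  have e1 : (eS p r c ^ j * g) (d + (j+1) • E1) = bA g r c j (d + E1) := by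
    rw [bA, addE1_smul]; rfl
  have e2 : S02 ≤ d + (j+1) • E1 ↔ S02 ≤ d := le_add_smulE1 S02_fst d (j+1)
  have e3 : E2 ≤ d + (j+1) • E1 ↔ E2 ≤ d := le_add_smulE1 E2_fst d (j+1)
  have e4 : (eS p r c ^ j * g) (d + (j+1) • E1 - S02) = bA g r c j ((d - S02) + E1) := by
    rw [sub_add_smulE1 S02_fst, bA, addE1_smul]; rfl
  have e5 : (eS p r c ^ j * g) (d + (j+1) • E1 - E2) = bA g r c j ((d - E2) + E1) := by
    rw [sub_add_smulE1 E2_fst, bA, addE1_smul]; rfl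
  rw [e1]
  congr 1
  · congr 1
    by_cases hS : S02 ≤ d
    · rw [if_pos hS, if_pos (e2.mpr hS), e4]
    · rw [if_neg hS, if_neg (fun hcon => hS (e2.mp hcon))]
  · by_cases hE : E2 ≤ d
    · rw [if_pos hE, if_pos (e3.mpr hE), e5]
    · rw [if_neg hE, if_neg (fun hcon => hE (e3.mp hcon))]

variable {g}

lemma bA_eventually_le (hc : ‖c‖ ≤ 1) (hg : TateB g) (x : M3) {ε : ℝ} (hε : 0 < ε) :
    ∃ N : ℕ, ∀ j, N ≤ j → ‖bA g r c j x‖ ≤ ε := by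
  classical
  set B := (hg ε hε).toFinset with hB
  refine ⟨B.sup (fun ν => ν 1) + 1, fun j hj => ?_⟩
  rw [bA, MvPowerSeries.coeff_mul]
  refine norm_sum_le_max _ _ hε.le fun q hq => ?_
  by_cases h0 : cf q.1 ((eS p r c)^j) = 0
  · rw [h0, zero_mul, norm_zero]; exact hε.le
  · have hq1 : q.1 1 = 0 := eS_pow_fst_eq_zero h0
    have hsum := Finset.HasAntidiagonal.mem_antidiagonal.mp hq
    have hco : q.1 1 + q.2 1 = x 1 + j * 1 := by
      have := DFunLike.congr_fun hsum 1
      simpa using this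
    have hq2 : q.2 1 = x 1 + j := by omega
    have hg2 : ‖cf q.2 g‖ ≤ ε := by
      by_contra hcon
      push_neg at hcon
      have hmem : q.2 ∈ B := by
        rw [hB, Set.Finite.mem_toFinset]
        exact hcon
      have h2le : q.2 1 ≤ B.sup (fun ν => ν 1) := Finset.le_sup (f := fun ν => ν 1) hmem
      omega
    rw [norm_mul]
    calc ‖cf q.1 ((eS p r c)^j)‖ * ‖cf q.2 g‖ ≤ 1 * ε :=
        mul_le_mul (eS_pow_norm_le hc j _) hg2 (norm_nonneg _) zero_le_one
      _ = ε := one_mul ε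

lemma bA_summable (hc : ‖c‖ ≤ 1) (hg : TateB g) (x : M3) :
    Summable (fun j => bA g r c j x) := by
  apply NonarchimedeanAddGroup.summable_of_tendsto_cofinite_zero
  rw [Nat.cofinite_eq_atTop, NormedAddCommGroup.tendsto_nhds_zero]
  intro ε hε
  obtain ⟨N, hN⟩ := bA_eventually_le hc hg x (half_pos hε)
  rw [Filter.eventually_atTop]
  exact ⟨N, fun j hj => lt_of_le_of_lt (hN j hj) (half_lt_self hε)⟩

variable (g) in
def SA (r : ℕ) (c : ℚ_[p]) (x : M3) : ℚ_[p] := ∑' j, bA g r c j x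

variable (g) in
def qA (r : ℕ) (c : ℚ_[p]) : MvPowerSeries (Fin 3) ℚ_[p] := fun x => SA g r c (x + E1)

lemma qA_coeff (x : M3) : cf x (qA g r c) = SA g r c (x + E1) := rfl

lemma SA_eq (hc : ‖c‖ ≤ 1) (hg : TateB g) (d : M3) :
    SA g r c d = cf d g + ∑' j, bA g r c (j+1) d := by
  rw [SA, Summable.tsum_eq_zero_add (bA_summable hc hg d), bA_zero]

end CaseA


lemma norm_sub_le_max' (a b : ℚ_[p]) : ‖a - b‖ ≤ max ‖a‖ ‖b‖ := by
  rw [sub_eq_add_neg]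
  refine le_trans (Padic.nonarchimedean _ _) ?_
  rw [norm_neg]

section CaseA2

variable {g h : MvPowerSeries (Fin 3) ℚ_[p]}

lemma eS_mul_qA_coeff (hc : ‖c‖ ≤ 1) (hg : TateB g) (d : M3) :
    cf d (eS p r c * qA g r c) = SA g r c d - cf d g := by
  classical
  have hs : ∀ x : M3, Summable (fun j => bA g r c j x) := bA_summable hc hg
  have s1 : Summable (fun j => c * bA g r c j (d + E1)) := (hs _).mul_left c
  have s2 : Summable (fun j => if S02 ≤ d then bA g r c j ((d - S02) + E1) else 0) := by
    split_ifs
    · exact hs _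
    · exact summable_zero
  have s3 : Summable (fun j => (p:K)^r * (if E2 ≤ d then bA g r c j ((d - E2) + E1) else 0)) := by
    split_ifs
    · exact (hs _).mul_left _
    · simpa using summable_zero
  have t1 : c * SA g r c (d + E1) = ∑' j, c * bA g r c j (d + E1) := tsum_mul_left.symm
  have t2 : (if S02 ≤ d then SA g r c ((d - S02) + E1) else 0)
      = ∑' j, (if S02 ≤ d then bA g r c j ((d - S02) + E1) else 0) := by
    split_ifs
    · rfl
    · exact tsum_zero.symm
  have t3 : (p:K)^r * (if E2 ≤ d then SA g r c ((d - E2) + E1) else 0)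
      = ∑' j, (p:K)^r * (if E2 ≤ d then bA g r c j ((d - E2) + E1) else 0) := by
    split_ifs
    · exact tsum_mul_left.symm
    · simp
  rw [eS_mul_coeff]
  have hq1 : (qA g r c) d = SA g r c (d + E1) := rfl
  have hq2 : (qA g r c) (d - S02) = SA g r c ((d - S02) + E1) := rfl
  have hq3 : (qA g r c) (d - E2) = SA g r c ((d - E2) + E1) := rfl
  rw [hq1, hq2, hq3, t1, t2, t3, ← Summable.tsum_add s1 s2, ← Summable.tsum_sub (s1.add s2) s3]
  have hcongr : ∀ j : ℕ,
      c * bA g r c j (d + E1) + (if S02 ≤ d then bA g r c j ((d - S02) + E1) else 0)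
      - (p:K)^r * (if E2 ≤ d then bA g r c j ((d - E2) + E1) else 0) = bA g r c (j+1) d :=
    fun j => (bA_succ g j d).symm
  rw [tsum_congr hcongr, SA_eq hc hg d, add_sub_cancel_left]

lemma gA_eq (hc : ‖c‖ ≤ 1) (hg : TateB g) {d : M3} (hd : d 1 ≠ 0) :
    cf d g = cf d ((MvPowerSeries.X 1 - eS p r c) * qA g r c) := by
  rw [sub_mul, map_sub, X1_mul_coeff, eS_mul_qA_coeff hc hg]
  have hE1d : E1 ≤ d := by
    rw [le_iff3]
    simp
    omega
  rw [if_pos hE1d]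
  have hq : (qA g r c) (d - E1) = SA g r c d := by
    show SA g r c ((d - E1) + E1) = SA g r c d
    rw [tsub_add_cancel_of_le hE1d]
  rw [hq]
  ring

lemma qA_tate (hc : ‖c‖ ≤ 1) (hg : TateB g) : TateB (qA g r c) := by
  classical
  intro ε hε
  set B := (hg ε hε).toFinset with hB
  set NB := B.sup (fun ν => ν 1) with hNB
  set L := NB + (B.sup (fun ν => ν 0) + B.sup (fun ν => ν 1) + B.sup (fun ν => ν 2)) with hL
  set bnd : M3 := Finsupp.single 0 L + Finsupp.single 1 L + Finsupp.single 2 L with hbnd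
  refine (Set.finite_Iic bnd).subset ?_
  intro x hx
  simp only [Set.mem_setOf_eq] at hx
  obtain ⟨j, hj⟩ := exists_lt_of_lt_norm_tsum hε.le hx
  rw [bA, MvPowerSeries.coeff_mul] at hj
  obtain ⟨q, hqmem, hq⟩ := exists_lt_of_lt_norm_sum hε.le hj
  have h0 : cf q.1 ((eS p r c)^j) ≠ 0 := by
    intro h0
    rw [h0, zero_mul, norm_zero] at hq
    linarith
  have hsupp := (le_iff3 _ _).mp (eS_pow_support h0)
  have hg2 : ε < ‖cf q.2 g‖ := by
    rcases le_or_gt ‖cf q.2 g‖ ε with hle | hlt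
    · exfalso
      have hb : ‖cf q.1 ((eS p r c)^j) * cf q.2 g‖ ≤ 1 * ε := by
        rw [norm_mul]
        exact mul_le_mul (eS_pow_norm_le hc j _) hle (norm_nonneg _) zero_le_one
      rw [one_mul] at hb
      linarith
    · exact hlt
  have hmem2 : q.2 ∈ B := by
    rw [hB, Set.Finite.mem_toFinset]
    exact hg2
  have hsum' : q.1 + q.2 = x + (j+1) • E1 := by
    rw [← addE1_smul]
    exact Finset.HasAntidiagonal.mem_antidiagonal.mp hqmem
  have hco : ∀ i : Fin 3, q.1 i + q.2 i = x i + (j+1) * E1 i := by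
    intro i
    have := DFunLike.congr_fun hsum' i
    simpa using this
  have hs0 : q.2 0 ≤ B.sup (fun ν => ν 0) := Finset.le_sup (f := fun ν => ν 0) hmem2
  have hs1 : q.2 1 ≤ B.sup (fun ν => ν 1) := Finset.le_sup (f := fun ν => ν 1) hmem2
  have hs2 : q.2 2 ≤ B.sup (fun ν => ν 2) := Finset.le_sup (f := fun ν => ν 2) hmem2
  have hp0 : q.1 0 ≤ j * 1 := by simpa using hsupp.1
  have hp1 : q.1 1 ≤ j * 0 := by simpa using hsupp.2.1
  have hp2 : q.1 2 ≤ j * 1 := by simpa using hsupp.2.2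
  have hjN : j + 1 ≤ NB := by
    have h1 : q.1 1 + q.2 1 = x 1 + (j+1) := by
      have := hco 1
      simpa using this
    rw [hNB]
    omega
  rw [Set.mem_Iic, le_iff3]
  have hb0 : bnd 0 = L := by rw [hbnd]; simp
  have hb1 : bnd 1 = L := by rw [hbnd]; simp
  have hb2 : bnd 2 = L := by rw [hbnd]; simp
  refine ⟨?_, ?_, ?_⟩
  · have h0' : q.1 0 + q.2 0 = x 0 := by
      have := hco 0
      simpa using this
    rw [hb0, hL]
    omega
  · have h1' : q.1 1 + q.2 1 = x 1 + (j+1) := by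
      have := hco 1
      simpa using this
    rw [hb1, hL]
    omega
  · have h2' : q.1 2 + q.2 2 = x 2 := by
      have := hco 2
      simpa using this
    rw [hb2, hL]
    omega

lemma TateB.sub {a b : PS} (ha : TateB a) (hb : TateB b) : TateB (a - b) := by
  intro ε hε
  refine ((ha ε hε).union (hb ε hε)).subset ?_
  intro d hd
  simp only [Set.mem_setOf_eq, Set.mem_union] at hd ⊢
  rw [map_sub] at hd
  have hmax := norm_sub_le_max' (cf d a) (cf d b)
  rcases lt_max_iff.mp (lt_of_lt_of_le hd hmax) with h | h
  · exact Or.inl h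
  · exact Or.inr h

lemma f1S_mul_tate {v : PS} (hv : TateB v) : TateB (f1S p r * v) := by
  intro ε hε
  refine (((hv ε hε).image (· + E0)).union (hv ε hε)).subset ?_
  intro d hd
  simp only [Set.mem_setOf_eq] at hd
  rw [f1S_mul_coeff] at hd
  have hmax := norm_sub_le_max' (if E0 ≤ d then v (d - E0) else 0) ((p:K)^r * v d)
  rcases lt_max_iff.mp (lt_of_lt_of_le hd hmax) with hcase | hcase
  · left
    by_cases hle : E0 ≤ d
    · rw [if_pos hle] at hcase
      exact ⟨d - E0, hcase, tsub_add_cancel_of_le hle⟩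
    · rw [if_neg hle, norm_zero] at hcase
      exact absurd (hcase.trans hε) (lt_irrefl ε)
  · right
    simp only [Set.mem_setOf_eq]
    have : ‖(p:K)^r * v d‖ ≤ ‖cf d v‖ := by
      rw [norm_mul]
      calc ‖(p:K)^r‖ * ‖v d‖ ≤ 1 * ‖v d‖ :=
          mul_le_mul_of_nonneg_right norm_p_pow_le_one (norm_nonneg _)
        _ = ‖cf d v‖ := one_mul _
    linarith

variable (p) in
def RelE (r : ℕ) (c : ℚ_[p]) (v : MvPowerSeries (Fin 3) ℚ_[p]) : Prop :=
  ∀ d : M3, cf d v = cf (d + E1) (eS p r c * v)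

lemma relE_mul {v : PS} (hv : RelE p r c v) : RelE p r c (eS p r c * v) := by
  intro d
  rw [eS_mul_coeff v d, eS_mul_coeff (eS p r c * v) (d + E1)]
  have e1 : (eS p r c * v) (d + E1) = v d := by
    show cf (d + E1) (eS p r c * v) = cf d v
    exact (hv d).symm
  have e2 : (eS p r c * v) ((d + E1) - S02) = v (d - S02) := by
    rw [sub_addE1 S02_fst]
    exact (hv (d - S02)).symm
  have e3 : (eS p r c * v) ((d + E1) - E2) = v (d - E2) := by
    rw [sub_addE1 E2_fst]
    exact (hv (d - E2)).symm
  rw [e1]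
  congr 1
  · congr 1
    by_cases hS : S02 ≤ d
    · rw [if_pos hS, if_pos ((le_addE1 S02_fst d).mpr hS), e2]
    · rw [if_neg hS, if_neg (fun hcon => hS ((le_addE1 S02_fst d).mp hcon))]
  · by_cases hE : E2 ≤ d
    · rw [if_pos hE, if_pos ((le_addE1 E2_fst d).mpr hE), e3]
    · rw [if_neg hE, if_neg (fun hcon => hE ((le_addE1 E2_fst d).mp hcon))]

lemma relE_pow : ∀ (N : ℕ) (v : PS), RelE p r c v →
    ∀ d, cf d v = cf (d + N • E1) ((eS p r c)^N * v) := by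
  intro N
  induction N with
  | zero =>
    intro v _ d
    rw [zero_smul, add_zero, pow_zero, one_mul]
  | succ n ih =>
    intro v hv d
    have h1 : cf d v = cf (d + E1) (eS p r c * v) := hv d
    have h2 := ih (eS p r c * v) (relE_mul hv) (d + E1)
    rw [h1, h2, addE1_smul]
    congr 1
    rw [← mul_assoc, ← pow_succ]

lemma relE_zero (hc : ‖c‖ ≤ 1) {v : PS} (hv : TateB v) (hrel : RelE p r c v) : v = 0 := by
  classical
  apply MvPowerSeries.ext
  intro d
  rw [map_zero]
  have key : ∀ ε : ℝ, 0 < ε → ‖cf d v‖ ≤ ε := by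
    intro ε hε
    set B := (hv ε hε).toFinset with hB
    set N := B.sup (fun ν => ν 1) + 1 with hN
    rw [relE_pow N v hrel d, MvPowerSeries.coeff_mul]
    refine norm_sum_le_max _ _ hε.le fun q hq => ?_
    by_cases h0 : cf q.1 ((eS p r c)^N) = 0
    · rw [h0, zero_mul, norm_zero]
      exact hε.le
    · have hq11 : q.1 1 = 0 := eS_pow_fst_eq_zero h0
      have hsum := Finset.HasAntidiagonal.mem_antidiagonal.mp hq
      have hco : q.1 1 + q.2 1 = d 1 + N * 1 := by
        have := DFunLike.congr_fun hsum 1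
        simpa using this
      have hle : ‖cf q.2 v‖ ≤ ε := by
        by_contra hcon
        push_neg at hcon
        have hmem : q.2 ∈ B := by
          rw [hB, Set.Finite.mem_toFinset]
          exact hcon
        have h2le : q.2 1 ≤ B.sup (fun ν => ν 1) := Finset.le_sup (f := fun ν => ν 1) hmem
        omega
      rw [norm_mul]
      calc ‖cf q.1 ((eS p r c)^N)‖ * ‖cf q.2 v‖ ≤ 1 * ε :=
          mul_le_mul (eS_pow_norm_le hc N _) hle (norm_nonneg _) zero_le_one
        _ = ε := one_mul ε
  have h0 : ‖cf d v‖ ≤ 0 := by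
    refine le_of_forall_pos_le_add fun ε hε => ?_
    rw [zero_add]
    exact key ε hε
  exact norm_le_zero_iff.mp h0

lemma caseA (hc : ‖c‖ ≤ 1) (hg : TateB g) (hh : TateB h)
    (heq : f1S p r * g = (MvPowerSeries.X 1 - eS p r c) * h) :
    ∃ q : PS, TateB q ∧ g = (MvPowerSeries.X 1 - eS p r c) * q := by
  refine ⟨qA g r c, qA_tate hc hg, ?_⟩
  set D := MvPowerSeries.X 1 - eS p r c with hD
  set w := h - f1S p r * qA g r c with hw
  have hwT : TateB w := hh.sub (f1S_mul_tate (qA_tate hc hg))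
  have hDw : D * w = f1S p r * (g - D * qA g r c) := by
    rw [hw, mul_sub, ← heq, mul_sub]
    ring
  have hrel : RelE p r c w := by
    intro d
    have h1 : cf (d + E1) (D * w)
        = cf (d + E1) (MvPowerSeries.X 1 * w) - cf (d + E1) (eS p r c * w) := by
      rw [hD, sub_mul, map_sub]
    have h2 : cf (d + E1) (MvPowerSeries.X 1 * w) = cf d w := by
      rw [X1_mul_coeff, if_pos (le_add_self : E1 ≤ d + E1), add_tsub_cancel_right]
      rfl
    have h3 : cf (d + E1) (f1S p r * (g - D * qA g r c)) = 0 := by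
      rw [f1S_mul_coeff]
      have z1 : (g - D * qA g r c) ((d + E1) - E0) = 0 := by
        show cf ((d + E1) - E0) (g - D * qA g r c) = 0
        have hco : ((d + E1) - E0) 1 ≠ 0 := by simp
        rw [map_sub, hD, ← gA_eq hc hg hco, sub_self]
      have z2 : (g - D * qA g r c) (d + E1) = 0 := by
        show cf (d + E1) (g - D * qA g r c) = 0
        have hco : (d + E1) 1 ≠ 0 := by simp
        rw [map_sub, hD, ← gA_eq hc hg hco, sub_self]
      rw [z2, mul_zero, sub_zero]
      split_ifs with hle
      · exact z1
      · rfl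
    have h4 : cf (d + E1) (D * w) = 0 := by
      rw [hDw]
      exact h3
    rw [h1, h2] at h4
    exact (sub_eq_zero.mp h4).symm ▸ rfl
  have hw0 : w = 0 := relE_zero hc hwT hrel
  have hfq : h = f1S p r * qA g r c := by rwa [sub_eq_zero] at hw0
  have hcancel : f1S p r * g = f1S p r * (D * qA g r c) := by
    rw [heq, hfq]
    ring
  exact mul_left_cancel₀ f1S_ne_zero hcancel

end CaseA2


lemma sub_S02_apply0 (m : M3) : (m - S02) 0 = m 0 - 1 := by simp
lemma sub_S02_apply1 (m : M3) : (m - S02) 1 = m 1 := by simp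
lemma sub_S02_apply2 (m : M3) : (m - S02) 2 = m 2 - 1 := by simp
lemma sub_E2_apply0 (m : M3) : (m - E2) 0 = m 0 := by simp
lemma sub_E2_apply1 (m : M3) : (m - E2) 1 = m 1 := by simp
lemma sub_E2_apply2 (m : M3) : (m - E2) 2 = m 2 - 1 := by simp
lemma S02_le_iff (m : M3) : S02 ≤ m ↔ 1 ≤ m 0 ∧ 1 ≤ m 2 := by
  rw [le_iff3]; simp
lemma E2_le_iff (m : M3) : E2 ≤ m ↔ 1 ≤ m 2 := by
  rw [le_iff3]; simp

section CaseB

variable {g : MvPowerSeries (Fin 3) ℚ_[p]}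

lemma eS_constantCoeff : MvPowerSeries.constantCoeff (σ := Fin 3) (R := ℚ_[p]) (eS p r c) = c := by
  rw [eS]
  simp

lemma invE_rec (hc0 : c ≠ 0) (μ : M3) :
    c * ((eS p r c)⁻¹ μ) + (if S02 ≤ μ then (eS p r c)⁻¹ (μ - S02) else 0)
      - (p:K)^r * (if E2 ≤ μ then (eS p r c)⁻¹ (μ - E2) else 0)
      = (if μ = 0 then 1 else 0) := by
  have h1 : eS p r c * (eS p r c)⁻¹ = 1 := by
    apply MvPowerSeries.mul_inv_cancel
    rw [eS_constantCoeff]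
    exact hc0
  have h2 := eS_mul_coeff (r := r) (c := c) ((eS p r c)⁻¹) μ
  rw [h1] at h2
  rw [← h2, MvPowerSeries.coeff_one]

lemma invE_bound (hc1 : 1 < ‖c‖) : ∀ (n : ℕ) (μ : M3), μ 2 ≤ n →
    ‖cf μ (eS p r c)⁻¹‖ ≤ (‖c‖⁻¹)^(1 + μ 2) ∧
      (cf μ (eS p r c)⁻¹ ≠ 0 → μ 1 = 0 ∧ μ 0 ≤ μ 2) := by
  have hc0 : c ≠ 0 := by
    intro h
    rw [h, norm_zero] at hc1
    linarith
  have hcinv : ‖c‖⁻¹ ≤ 1 := by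
    rw [inv_le_one_iff₀]
    right
    linarith
  have hcinv0 : (0:ℝ) ≤ ‖c‖⁻¹ := by positivity
  intro n
  induction n with
  | zero =>
    intro μ hμ
    have hμ2 : μ 2 = 0 := Nat.le_zero.mp hμ
    have hS : ¬ S02 ≤ μ := by
      intro hcon
      have := ((le_iff3 _ _).mp hcon).2.2
      simp [hμ2] at this
    have hE : ¬ E2 ≤ μ := by
      intro hcon
      have := ((le_iff3 _ _).mp hcon).2.2
      simp [hμ2] at this
    have hrec := invE_rec (r := r) hc0 μ
    rw [if_neg hS, if_neg hE, mul_zero, add_zero, sub_zero] at hrec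
    have hval : cf μ (eS p r c)⁻¹ = c⁻¹ * (if μ = 0 then 1 else 0) := by
      rw [← hrec, inv_mul_cancel_left₀ hc0]
      rfl
    constructor
    · rw [hval]
      split_ifs with h
      · rw [mul_one, norm_inv, hμ2, pow_one]
      · rw [mul_zero, norm_zero]
        positivity
    · intro hne
      rw [hval] at hne
      split_ifs at hne with h
      · subst h
        simp
      · simp at hne
  | succ n ih =>
    intro μ hμ
    by_cases hn : μ 2 ≤ n
    · exact ih μ hn
    · have hμ2 : μ 2 = n + 1 := by omega
      have hμ0 : μ ≠ 0 := by
        intro h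
        rw [h] at hμ2
        simp at hμ2
      have hrec := invE_rec (r := r) hc0 μ
      rw [if_neg hμ0] at hrec
      have hval : cf μ (eS p r c)⁻¹ = c⁻¹ *
          ((p:K)^r * (if E2 ≤ μ then (eS p r c)⁻¹ (μ - E2) else 0)
            - (if S02 ≤ μ then (eS p r c)⁻¹ (μ - S02) else 0)) := by
      -- from hrec : c * x + A - B' = 0 where B' = p^r * ...
        have : c * ((eS p r c)⁻¹ μ) = (p:K)^r * (if E2 ≤ μ then (eS p r c)⁻¹ (μ - E2) else 0)
            - (if S02 ≤ μ then (eS p r c)⁻¹ (μ - S02) else 0) := by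
          linear_combination hrec
        rw [← this, inv_mul_cancel_left₀ hc0]
        rfl
      -- norms of the two pieces
      have hA : ‖(if S02 ≤ μ then (eS p r c)⁻¹ (μ - S02) else 0)‖ ≤ (‖c‖⁻¹)^(1 + n) := by
        split_ifs with hS
        · have h2 : (μ - S02) 2 ≤ n := by
            rw [sub_S02_apply2]
            omega
          exact (ih (μ - S02) h2).1.trans (by
            apply pow_le_pow_of_le_one hcinv0 hcinv
            rw [sub_S02_apply2]
            omega)
        · rw [norm_zero]
          positivity
      have hB : ‖(p:K)^r * (if E2 ≤ μ then (eS p r c)⁻¹ (μ - E2) else 0)‖ ≤ (‖c‖⁻¹)^(1 + n) := by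
        rw [norm_mul]
        have hE' : ‖(if E2 ≤ μ then (eS p r c)⁻¹ (μ - E2) else 0)‖ ≤ (‖c‖⁻¹)^(1 + n) := by
          split_ifs with hE
          · have h2 : (μ - E2) 2 ≤ n := by
              rw [sub_E2_apply2]
              omega
            exact (ih (μ - E2) h2).1.trans (by
              apply pow_le_pow_of_le_one hcinv0 hcinv
              rw [sub_E2_apply2]
              omega)
          · rw [norm_zero]
            positivity
        calc ‖(p:K)^r‖ * ‖(if E2 ≤ μ then (eS p r c)⁻¹ (μ - E2) else 0)‖
            ≤ 1 * ((‖c‖⁻¹)^(1 + n)) :=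
              mul_le_mul norm_p_pow_le_one hE' (norm_nonneg _) zero_le_one
          _ = (‖c‖⁻¹)^(1 + n) := one_mul _
      constructor
      · rw [hval, norm_mul, norm_inv]
        have hsub : ‖(p:K)^r * (if E2 ≤ μ then (eS p r c)⁻¹ (μ - E2) else 0)
            - (if S02 ≤ μ then (eS p r c)⁻¹ (μ - S02) else 0)‖ ≤ (‖c‖⁻¹)^(1 + n) :=
          le_trans (norm_sub_le_max' _ _) (max_le hB hA)
        calc ‖c‖⁻¹ * ‖(p:K)^r * (if E2 ≤ μ then (eS p r c)⁻¹ (μ - E2) else 0)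
            - (if S02 ≤ μ then (eS p r c)⁻¹ (μ - S02) else 0)‖
            ≤ ‖c‖⁻¹ * (‖c‖⁻¹)^(1 + n) := mul_le_mul_of_nonneg_left hsub hcinv0
          _ = (‖c‖⁻¹)^(1 + μ 2) := by
              rw [hμ2, ← pow_succ']
              ring_nf
      · intro hne
        rw [hval] at hne
        have hinner : (p:K)^r * (if E2 ≤ μ then (eS p r c)⁻¹ (μ - E2) else 0)
            - (if S02 ≤ μ then (eS p r c)⁻¹ (μ - S02) else 0) ≠ 0 := by
          intro h
          rw [h, mul_zero] at hne
          exact hne rfl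
        -- one of the two pieces is nonzero
        by_cases hScase : S02 ≤ μ ∧ (eS p r c)⁻¹ (μ - S02) ≠ 0
        · obtain ⟨hS, hSne⟩ := hScase
          have h2 : (μ - S02) 2 ≤ n := by
            rw [sub_S02_apply2]
            omega
          have hsupp := (ih (μ - S02) h2).2 hSne
          have hle := (S02_le_iff μ).mp hS
          rw [sub_S02_apply1] at hsupp
          have h0' := hsupp.2
          rw [sub_S02_apply0, sub_S02_apply2] at h0'
          exact ⟨hsupp.1, by omega⟩
        · have hEcase : E2 ≤ μ ∧ (eS p r c)⁻¹ (μ - E2) ≠ 0 := by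
            by_contra hcon
            apply hinner
            have hA0 : (if S02 ≤ μ then (eS p r c)⁻¹ (μ - S02) else 0) = 0 := by
              split_ifs with hS
              · by_contra hne2
                exact hScase ⟨hS, hne2⟩
              · rfl
            have hB0 : (if E2 ≤ μ then (eS p r c)⁻¹ (μ - E2) else 0) = 0 := by
              split_ifs with hE
              · by_contra hne2
                exact hcon ⟨hE, hne2⟩
              · rfl
            rw [hA0, hB0, mul_zero, sub_zero]
          obtain ⟨hE, hEne⟩ := hEcase
          have h2 : (μ - E2) 2 ≤ n := by
            rw [sub_E2_apply2]
            omega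
          have hsupp := (ih (μ - E2) h2).2 hEne
          have hle := (E2_le_iff μ).mp hE
          rw [sub_E2_apply1] at hsupp
          have h0' := hsupp.2
          rw [sub_E2_apply0, sub_E2_apply2] at h0'
          exact ⟨hsupp.1, by omega⟩

lemma invE_pow_bound (hc1 : 1 < ‖c‖) : ∀ (k : ℕ) (μ : M3),
    ‖cf μ ((eS p r c)⁻¹ ^ (k+1))‖ ≤ (‖c‖⁻¹)^(k + 1 + μ 2) ∧
      (cf μ ((eS p r c)⁻¹ ^ (k+1)) ≠ 0 → μ 1 = 0 ∧ μ 0 ≤ μ 2) := by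
  have hcinv0 : (0:ℝ) ≤ ‖c‖⁻¹ := by positivity
  intro k
  induction k with
  | zero =>
    intro μ
    rw [pow_one]
    have := invE_bound (r := r) hc1 (μ 2) μ le_rfl
    simpa using this
  | succ n ih =>
    intro μ
    constructor
    · rw [pow_succ, MvPowerSeries.coeff_mul]
      refine norm_sum_le_max _ _ (by positivity) fun q hq => ?_
      have hco : q.1 2 + q.2 2 = μ 2 := by
        have := DFunLike.congr_fun (Finset.HasAntidiagonal.mem_antidiagonal.mp hq) 2
        simpa using this
      rw [norm_mul]
      calc ‖cf q.1 ((eS p r c)⁻¹ ^ (n+1))‖ * ‖cf q.2 (eS p r c)⁻¹‖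
          ≤ (‖c‖⁻¹)^(n + 1 + q.1 2) * (‖c‖⁻¹)^(1 + q.2 2) :=
            mul_le_mul (ih q.1).1 (invE_bound (r := r) hc1 (q.2 2) q.2 le_rfl).1
              (norm_nonneg _) (by positivity)
        _ = (‖c‖⁻¹)^(n + 1 + 1 + μ 2) := by
            rw [← pow_add]
            congr 1
            omega
    · intro hne
      rw [pow_succ, MvPowerSeries.coeff_mul] at hne
      obtain ⟨q, hq, hqne⟩ := Finset.exists_ne_zero_of_sum_ne_zero hne
      have h1 := (ih q.1).2 (left_ne_zero_of_mul hqne)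
      have h2 := (invE_bound (r := r) hc1 (q.2 2) q.2 le_rfl).2 (right_ne_zero_of_mul hqne)
      have hco : ∀ i : Fin 3, q.1 i + q.2 i = μ i := by
        intro i
        exact DFunLike.congr_fun (Finset.HasAntidiagonal.mem_antidiagonal.mp hq) i
      constructor
      · have := hco 1
        omega
      · have h0 := hco 0
        have h2' := hco 2
        omega

variable (p) in
def UB (r : ℕ) (c : ℚ_[p]) : MvPowerSeries (Fin 3) ℚ_[p] :=
  fun d => cf (d - d 1 • E1) ((eS p r c)⁻¹ ^ (d 1 + 1))

lemma UB_coeff (d : M3) : cf d (UB p r c) = cf (d - d 1 • E1) ((eS p r c)⁻¹ ^ (d 1 + 1)) := rfl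

lemma X1_mul_UB_coeff (d : M3) :
    cf d (MvPowerSeries.X 1 * UB p r c)
      = if 1 ≤ d 1 then cf (d - d 1 • E1) ((eS p r c)⁻¹ ^ (d 1)) else 0 := by
  rw [X1_mul_coeff]
  have hiff : E1 ≤ d ↔ 1 ≤ d 1 := by
    rw [le_iff3]
    simp
  by_cases hd : 1 ≤ d 1
  · rw [if_pos (hiff.mpr hd), if_pos hd]
    show cf ((d - E1) - (d - E1) 1 • E1) ((eS p r c)⁻¹ ^ ((d - E1) 1 + 1)) = _
    have h1 : (d - E1) 1 = d 1 - 1 := by simp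
    have h2 : (d - E1) - (d 1 - 1) • E1 = d - d 1 • E1 := by
      apply ext3 <;> simp <;> omega
    have h3 : d 1 - 1 + 1 = d 1 := by omega
    rw [h1, h2, h3]
  · rw [if_neg (fun hcon => hd (hiff.mp hcon)), if_neg hd]

lemma eS_mul_UB_coeff (hc0 : c ≠ 0) (d : M3) :
    cf d (eS p r c * UB p r c) = cf (d - d 1 • E1) ((eS p r c)⁻¹ ^ (d 1)) := by
  have hmulpow : eS p r c * (eS p r c)⁻¹ ^ (d 1 + 1) = (eS p r c)⁻¹ ^ (d 1) := by
    rw [pow_succ', ← mul_assoc, MvPowerSeries.mul_inv_cancel _ (by rw [eS_constantCoeff]; exact hc0), one_mul]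
  rw [← hmulpow, eS_mul_coeff, eS_mul_coeff]
  set m := d - d 1 • E1 with hm
  have hm0 : m 0 = d 0 := by rw [hm]; simp
  have hm1 : m 1 = 0 := by rw [hm]; simp
  have hm2 : m 2 = d 2 := by rw [hm]; simp
  have e1 : (UB p r c) d = ((eS p r c)⁻¹ ^ (d 1 + 1)) m := rfl
  have e2 : (UB p r c) (d - S02) = ((eS p r c)⁻¹ ^ (d 1 + 1)) (m - S02) := by
    show cf ((d - S02) - (d - S02) 1 • E1) ((eS p r c)⁻¹ ^ ((d - S02) 1 + 1)) = _
    have h1 : (d - S02) 1 = d 1 := by simp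
    have h2 : (d - S02) - d 1 • E1 = m - S02 := by
      rw [hm]
      apply ext3 <;> simp <;> omega
    rw [h1, h2]
    rfl
  have e3 : (UB p r c) (d - E2) = ((eS p r c)⁻¹ ^ (d 1 + 1)) (m - E2) := by
    show cf ((d - E2) - (d - E2) 1 • E1) ((eS p r c)⁻¹ ^ ((d - E2) 1 + 1)) = _
    have h1 : (d - E2) 1 = d 1 := by simp
    have h2 : (d - E2) - d 1 • E1 = m - E2 := by
      rw [hm]
      apply ext3 <;> simp <;> omega
    rw [h1, h2]
    rfl
  have i1 : (S02 ≤ d) ↔ (S02 ≤ m) := by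
    rw [le_iff3, le_iff3]
    simp [hm0, hm1, hm2]
  have i2 : (E2 ≤ d) ↔ (E2 ≤ m) := by
    rw [le_iff3, le_iff3]
    simp [hm0, hm1, hm2]
  rw [e1]
  congr 1
  · congr 1
    by_cases hS : S02 ≤ d
    · rw [if_pos hS, if_pos (i1.mp hS), e2]
    · rw [if_neg hS, if_neg (fun hcon => hS (i1.mpr hcon))]
  · by_cases hE : E2 ≤ d
    · rw [if_pos hE, if_pos (i2.mp hE), e3]
    · rw [if_neg hE, if_neg (fun hcon => hE (i2.mpr hcon))]

lemma X1_sub_eS_mul_UB (hc0 : c ≠ 0) :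
    (MvPowerSeries.X 1 - eS p r c) * UB p r c = -1 := by
  apply MvPowerSeries.ext
  intro d
  rw [sub_mul, map_sub, X1_mul_UB_coeff, eS_mul_UB_coeff hc0, map_neg, MvPowerSeries.coeff_one]
  by_cases hd : 1 ≤ d 1
  · rw [if_pos hd, sub_self]
    have hd0 : d ≠ 0 := by
      intro h
      rw [h] at hd
      simp at hd
    rw [if_neg hd0, neg_zero]
  · rw [if_neg hd]
    have hd1 : d 1 = 0 := by omega
    have hsmul : d 1 • E1 = 0 := by rw [hd1, zero_smul]
    rw [hd1, zero_smul, tsub_zero, pow_zero, MvPowerSeries.coeff_one, zero_sub]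

lemma TateB.neg {v : PS} (hv : TateB v) : TateB (-v) := by
  intro ε hε
  refine (hv ε hε).subset ?_
  intro d hd
  simp only [Set.mem_setOf_eq, map_neg, norm_neg] at hd ⊢
  exact hd

lemma UB_mul_tate (hc1 : 1 < ‖c‖) (hg : TateB g) : TateB (UB p r c * g) := by
  classical
  have hcinv0 : (0:ℝ) ≤ ‖c‖⁻¹ := by positivity
  have hcinv1 : ‖c‖⁻¹ < 1 := by
    rw [inv_lt_one_iff₀]
    right
    exact hc1
  intro ε hε
  obtain ⟨Mg, hMg0, hMgle⟩ := hg.bound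
  obtain ⟨KK, hKK⟩ := exists_pow_lt_of_lt_one (div_pos hε hMg0) hcinv1
  set B := (hg ε hε).toFinset with hB
  set L := KK + (B.sup (fun ν => ν 0) + B.sup (fun ν => ν 1) + B.sup (fun ν => ν 2)) with hL
  set bnd : M3 := Finsupp.single 0 L + Finsupp.single 1 L + Finsupp.single 2 L with hbnd
  refine (Set.finite_Iic bnd).subset ?_
  intro d hd
  simp only [Set.mem_setOf_eq] at hd
  rw [MvPowerSeries.coeff_mul] at hd
  obtain ⟨q, hqmem, hq⟩ := exists_lt_of_lt_norm_sum hε.le hd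
  have hU0 : cf q.1 (UB p r c) ≠ 0 := by
    intro h0
    rw [h0, zero_mul, norm_zero] at hq
    linarith
  -- bound on UB coefficient
  set m1 := q.1 - q.1 1 • E1 with hm1
  have hm12 : m1 2 = q.1 2 := by rw [hm1]; simp
  have hUbd : ‖cf q.1 (UB p r c)‖ ≤ (‖c‖⁻¹)^(q.1 1 + 1 + q.1 2) := by
    rw [UB_coeff]
    have := (invE_pow_bound (r := r) hc1 (q.1 1) m1).1
    rw [hm12] at this
    exact this
  have hUsupp : q.1 0 ≤ q.1 2 := by
    have := (invE_pow_bound (r := r) hc1 (q.1 1) m1).2 hU0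
    rw [hm12] at this
    have hm10 : m1 0 = q.1 0 := by rw [hm1]; simp
    rw [hm10] at this
    exact this.2
  have hnorm : ‖cf q.1 (UB p r c) * cf q.2 g‖ = ‖cf q.1 (UB p r c)‖ * ‖cf q.2 g‖ :=
    norm_mul _ _
  have hUle1 : ‖cf q.1 (UB p r c)‖ ≤ 1 := by
    refine hUbd.trans ?_
    exact pow_le_one₀ hcinv0 hcinv1.le
  have hgB : ε < ‖cf q.2 g‖ := by
    rcases le_or_gt ‖cf q.2 g‖ ε with hle | hlt
    · exfalso
      have : ‖cf q.1 (UB p r c) * cf q.2 g‖ ≤ 1 * ε := by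
        rw [hnorm]
        exact mul_le_mul hUle1 hle (norm_nonneg _) zero_le_one
      rw [one_mul] at this
      linarith
    · exact hlt
  have hmem2 : q.2 ∈ B := by
    rw [hB, Set.Finite.mem_toFinset]
    exact hgB
  -- exponent bound
  have hexp : q.1 1 + 1 + q.1 2 < KK := by
    by_contra hcon
    push_neg at hcon
    have hle : (‖c‖⁻¹)^(q.1 1 + 1 + q.1 2) ≤ (‖c‖⁻¹)^KK :=
      pow_le_pow_of_le_one hcinv0 hcinv1.le hcon
    have h1 : ‖cf q.1 (UB p r c) * cf q.2 g‖ ≤ (‖c‖⁻¹)^KK * Mg := by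
      rw [hnorm]
      exact mul_le_mul (hUbd.trans hle) (hMgle q.2) (norm_nonneg _) (by positivity)
    have h2 : (‖c‖⁻¹)^KK * Mg < (ε / Mg) * Mg :=
      mul_lt_mul_of_pos_right hKK hMg0
    rw [div_mul_cancel₀ ε (ne_of_gt hMg0)] at h2
    linarith
  have hs0 : q.2 0 ≤ B.sup (fun ν => ν 0) := Finset.le_sup (f := fun ν => ν 0) hmem2
  have hs1 : q.2 1 ≤ B.sup (fun ν => ν 1) := Finset.le_sup (f := fun ν => ν 1) hmem2
  have hs2 : q.2 2 ≤ B.sup (fun ν => ν 2) := Finset.le_sup (f := fun ν => ν 2) hmem2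
  have hco : ∀ i : Fin 3, q.1 i + q.2 i = d i := by
    intro i
    exact DFunLike.congr_fun (Finset.HasAntidiagonal.mem_antidiagonal.mp hqmem) i
  rw [Set.mem_Iic, le_iff3]
  have hb0 : bnd 0 = L := by rw [hbnd]; simp
  have hb1 : bnd 1 = L := by rw [hbnd]; simp
  have hb2 : bnd 2 = L := by rw [hbnd]; simp
  refine ⟨?_, ?_, ?_⟩
  · have := hco 0
    rw [hb0, hL]
    omega
  · have := hco 1
    rw [hb1, hL]
    omega
  · have := hco 2
    rw [hb2, hL]
    omega

lemma caseB (hc1 : 1 < ‖c‖) (hg : TateB g) :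
    ∃ q : PS, TateB q ∧ g = (MvPowerSeries.X 1 - eS p r c) * q := by
  have hc0 : c ≠ 0 := by
    intro h
    rw [h, norm_zero] at hc1
    linarith
  refine ⟨-(UB p r c * g), (UB_mul_tate hc1 hg).neg, ?_⟩
  rw [mul_neg, ← mul_assoc, X1_sub_eS_mul_UB hc0]
  ring

end CaseB

end
end Stmt8Aux

/-- With `f_1 = S_1 - p^r` and `f_2 = S_2 - c` in `A = ℚ_p⟨S_1,S_2,Q_1⟩`, the element `f_1`
is not a zero divisor in `A/(f_2 - Q_1 f_1)`: if `f_1·g ≡ 0 mod (f_2 - Q_1 f_1)` in the Tate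
algebra, then `g ≡ 0 mod (f_2 - Q_1 f_1)` in the Tate algebra. -/
theorem stmt_8 (p : ℕ) [Fact p.Prime] (r : ℕ) (hr : 1 ≤ r) (c : ℚ_[p])
    (g h : MvPowerSeries (Fin 3) ℚ_[p]) (hg : IsTate3 p g) (hh : IsTate3 p h)
    (heq : (MvPowerSeries.X 0 - MvPowerSeries.C (σ := Fin 3) (R := ℚ_[p]) ((p : ℚ_[p]) ^ r)) * g =
      ((MvPowerSeries.X 1 - MvPowerSeries.C (σ := Fin 3) (R := ℚ_[p]) c) -
        MvPowerSeries.X 2 *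
          (MvPowerSeries.X 0 - MvPowerSeries.C (σ := Fin 3) (R := ℚ_[p]) ((p : ℚ_[p]) ^ r))) * h) :
    ∃ q, IsTate3 p q ∧
      g = ((MvPowerSeries.X 1 - MvPowerSeries.C (σ := Fin 3) (R := ℚ_[p]) c) -
        MvPowerSeries.X 2 *
          (MvPowerSeries.X 0 - MvPowerSeries.C (σ := Fin 3) (R := ℚ_[p]) ((p : ℚ_[p]) ^ r))) * q := by
  classical
  have hD : (MvPowerSeries.X 1 - MvPowerSeries.C (σ := Fin 3) (R := ℚ_[p]) c) -
      MvPowerSeries.X 2 *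
        (MvPowerSeries.X 0 - MvPowerSeries.C (σ := Fin 3) (R := ℚ_[p]) ((p : ℚ_[p]) ^ r))
      = MvPowerSeries.X 1 - Stmt8Aux.eS p r c := by
    rw [Stmt8Aux.eS]
    ring
  have hf1 : (MvPowerSeries.X 0 - MvPowerSeries.C (σ := Fin 3) (R := ℚ_[p]) ((p : ℚ_[p]) ^ r))
      = Stmt8Aux.f1S p r := rfl
  rw [Stmt8Aux.isTate3_iff_tateB] at hg hh
  rw [hD, hf1] at heq
  rcases le_or_gt ‖c‖ 1 with hc | hc
  · obtain ⟨q, hq, hgq⟩ := Stmt8Aux.caseA hc hg hh heq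
    refine ⟨q, (Stmt8Aux.isTate3_iff_tateB q).mpr hq, ?_⟩
    rw [hD]
    exact hgq
  · obtain ⟨q, hq, hgq⟩ := Stmt8Aux.caseB hc hg
    refine ⟨q, (Stmt8Aux.isTate3_iff_tateB q).mpr hq, ?_⟩
    rw [hD]
    exact hgq
end

section
/- For n ≥ 1 and r ≥ 1 define G_{n,r+1}(T) = [1 - (φ_n(T)/p)^{r+1}]^{r+1} · (1/p^n) · Π_{i>n} [1 - (1 - φ_i(T)/p)^{r+1}]^{r+1}. Then for every l ≥ 1 and all n ≥ l, v_p(G_{n,r+1}(T), 1/φ(p^l)) > n·r - (r+1)·l - (r+1); in particular G_{n,r+1}(T) → 0 as n → ∞ with respect to each valuation v_p(·, 1/φ(p^l)). -/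
open PowerSeries Filter

/-- `φ_n(T)` as a power series over `ℚ_p`. -/
noncomputable def phiPS (p : ℕ) [Fact p.Prime] (n : ℕ) : PowerSeries ℚ_[p] :=
  ∑ c ∈ Finset.range p, (1 + PowerSeries.X) ^ (c * p ^ (n - 1))

/-- The partial products defining
`G_{n,r+1}(T) = [1 - (φ_n/p)^{r+1}]^{r+1} · (1/p^n) · Π_{i>n}[1 - (1 - φ_i/p)^{r+1}]^{r+1}`,
the product taken over `n < i ≤ N`. -/
noncomputable def Gpartial (p : ℕ) [Fact p.Prime] (n r N : ℕ) : PowerSeries ℚ_[p] :=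
  (1 - (PowerSeries.C (1 / (p : ℚ_[p])) * phiPS p n) ^ (r + 1)) ^ (r + 1) *
    PowerSeries.C (1 / (p : ℚ_[p]) ^ n) *
    ∏ i ∈ Finset.Ioc n N,
      (1 - (1 - PowerSeries.C (1 / (p : ℚ_[p])) * phiPS p i) ^ (r + 1)) ^ (r + 1)

variable {p : ℕ} [Fact p.Prime]

def Nb (p : ℕ) [Fact p.Prime] (s b : ℝ) (f : PowerSeries ℚ_[p]) : Prop :=
  ∀ j : ℕ, ‖coeff j f‖ ≤ (p : ℝ) ^ ((j : ℝ) * s - b)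

lemma hp1 : (1:ℝ) < (p:ℝ) := by exact_mod_cast (Fact.out : p.Prime).one_lt

lemma Nb_mono {s b b' : ℝ} (h : b' ≤ b) {f : PowerSeries ℚ_[p]} (hf : Nb p s b f) :
    Nb p s b' f := fun j =>
  (hf j).trans (Real.rpow_le_rpow_of_exponent_le hp1.le (by linarith))

lemma Nb_one {s : ℝ} : Nb p s 0 (1 : PowerSeries ℚ_[p]) := by
  intro j
  rw [PowerSeries.coeff_one]
  split
  · subst ‹j = 0›; simp
  · simpa using (Real.rpow_pos_of_pos (by linarith [hp1 (p := p)]) _).le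

lemma Nb_norm_sum_le {ι : Type*} (F : Finset ι) (f : ι → ℚ_[p]) {B : ℝ} (hB : 0 ≤ B)
    (h : ∀ i ∈ F, ‖f i‖ ≤ B) : ‖∑ i ∈ F, f i‖ ≤ B := by
  classical
  induction F using Finset.induction with
  | empty => simpa using hB
  | @insert a t hx ih =>
    rw [Finset.sum_insert hx]
    refine (Padic.nonarchimedean _ _).trans (max_le (h a (by simp)) ?_)
    exact ih fun i hi => h i (by simp [hi])

lemma Nb_mul {s a b : ℝ} {f g : PowerSeries ℚ_[p]} (hf : Nb p s a f) (hg : Nb p s b g) :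
    Nb p s (a + b) (f * g) := by
  intro j
  rw [PowerSeries.coeff_mul]
  refine Nb_norm_sum_le _ _ (Real.rpow_pos_of_pos (by linarith [hp1 (p := p)]) _).le ?_
  rintro ⟨i, k⟩ hik
  have hik0 : i + k = j := Finset.HasAntidiagonal.mem_antidiagonal.mp hik
  have hik' : ((i:ℝ) + k) = (j:ℝ) := by exact_mod_cast hik0
  dsimp only
  rw [norm_mul]
  calc ‖coeff i f‖ * ‖coeff k g‖
      ≤ (p:ℝ) ^ ((i:ℝ) * s - a) * (p:ℝ) ^ ((k:ℝ) * s - b) :=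
        mul_le_mul (hf i) (hg k) (norm_nonneg _)
          (Real.rpow_pos_of_pos (by linarith [hp1 (p := p)]) _).le
    _ = (p:ℝ) ^ ((j:ℝ) * s - (a + b)) := by
        rw [← Real.rpow_add (by linarith [hp1 (p := p)])]
        congr 1
        linear_combination s * hik'

lemma Nb_pow {s b : ℝ} (hb : 0 ≤ b) {f : PowerSeries ℚ_[p]} (hf : Nb p s b f) (k : ℕ) :
    Nb p s ((k : ℝ) * b) (f ^ k) := by
  induction k with
  | zero => simpa using Nb_one
  | succ k ih =>
    rw [pow_succ]
    have := Nb_mul ih hf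
    refine Nb_mono (le_of_eq ?_) this
    push_cast; ring

lemma Nb_sum {ι : Type*} {s b : ℝ} (F : Finset ι) (f : ι → PowerSeries ℚ_[p])
    (h : ∀ i ∈ F, Nb p s b (f i)) : Nb p s b (∑ i ∈ F, f i) := by
  intro j
  rw [map_sum]
  exact Nb_norm_sum_le _ _ (Real.rpow_pos_of_pos (by linarith [hp1 (p := p)]) _).le
    fun i hi => h i hi j

lemma Nb_neg {s b : ℝ} {f : PowerSeries ℚ_[p]} (hf : Nb p s b f) : Nb p s b (-f) := by
  intro j; rw [map_neg, norm_neg]; exact hf j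

lemma Nb_sub {s b : ℝ} {f g : PowerSeries ℚ_[p]} (hf : Nb p s b f) (hg : Nb p s b g) :
    Nb p s b (f - g) := by
  intro j
  rw [map_sub, sub_eq_add_neg]
  refine (Padic.nonarchimedean _ _).trans (max_le (hf j) ?_)
  rw [norm_neg]
  exact hg j

lemma Nb_prod0 {ι : Type*} {s : ℝ} (F : Finset ι) (f : ι → PowerSeries ℚ_[p])
    (h : ∀ i ∈ F, Nb p s 0 (f i)) : Nb p s 0 (∏ i ∈ F, f i) := by
  classical
  induction F using Finset.induction with
  | empty => simpa using Nb_one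
  | @insert a t hx ih =>
    rw [Finset.prod_insert hx]
    have := Nb_mul (h a (by simp)) (ih fun i hi => h i (by simp [hi]))
    simpa using this

lemma Nb_C {s b : ℝ} {c : ℚ_[p]} (hc : ‖c‖ ≤ (p:ℝ) ^ (-b)) : Nb p s b (C c) := by
  intro j
  rw [PowerSeries.coeff_C]
  split
  · subst ‹j = 0›
    simpa using hc
  · simpa using (Real.rpow_pos_of_pos (by linarith [hp1 (p := p)]) _).le

lemma coeff_one_add_X_pow_PS (m j : ℕ) :
    coeff j ((1 + X) ^ m) = (m.choose j : ℚ_[p]) := by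
  have h1 : ((1 + X : PowerSeries ℚ_[p])) = ((1 + Polynomial.X : Polynomial ℚ_[p]) :
      PowerSeries ℚ_[p]) := by
    rw [Polynomial.coe_add, Polynomial.coe_one, Polynomial.coe_X]
  rw [h1, ← Polynomial.coe_pow, Polynomial.coeff_coe, Polynomial.coeff_one_add_X_pow]

noncomputable def Ym (p : ℕ) [Fact p.Prime] (n : ℕ) : PowerSeries ℚ_[p] :=
  (1 + X) ^ (p ^ (n - 1)) - 1

lemma coeff_Ym (n j : ℕ) :
    coeff j (Ym p n) = if j = 0 then 0 else ((p ^ (n-1)).choose j : ℚ_[p]) := by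
  rw [Ym, map_sub, coeff_one_add_X_pow_PS, PowerSeries.coeff_one]
  split
  · subst ‹j = 0›; simp
  · simp

lemma Ym_ne_zero (n : ℕ) : Ym p n ≠ 0 := by
  intro h
  have h2 := coeff_Ym (p := p) n 1
  rw [h, map_zero] at h2
  simp only [one_ne_zero, if_false, Nat.choose_one_right] at h2
  exact (Nat.cast_ne_zero (R := ℚ_[p])).mpr (pow_ne_zero _ (Fact.out : p.Prime).ne_zero) h2.symm

/-- `φ_n = ∑_{d<p} choose(p, d+1) • Y_n^d`. -/
lemma phi_eq (n : ℕ) :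
    phiPS p n = ∑ d ∈ Finset.range p, ((p.choose (d+1) : ℚ_[p]⟦X⟧)) * (Ym p n) ^ d := by
  have hY : Ym p n ≠ 0 := Ym_ne_zero n
  apply mul_right_cancel₀ hY
  have hZ : (1 + X : PowerSeries ℚ_[p]) ^ (p ^ (n-1)) = Ym p n + 1 := by rw [Ym]; ring
  calc phiPS p n * Ym p n
      = (∑ c ∈ Finset.range p, ((1 + X : PowerSeries ℚ_[p]) ^ (p ^ (n-1))) ^ c) *
        (((1 + X : PowerSeries ℚ_[p]) ^ (p ^ (n-1))) - 1) := by
        rw [phiPS, Ym]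
        congr 1
        refine Finset.sum_congr rfl fun c _ => ?_
        rw [← pow_mul, mul_comm]
    _ = (Ym p n + 1) ^ p - 1 := by rw [geom_sum_mul, hZ]
    _ = ∑ k ∈ Finset.range p, (Ym p n) ^ (k+1) * ((p.choose (k+1) : ℚ_[p]⟦X⟧)) := by
        rw [add_pow]
        simp only [one_pow, mul_one]
        rw [Finset.sum_range_succ']
        simp only [pow_zero, one_mul, Nat.choose_zero_right, Nat.cast_one]
        ring
    _ = (∑ d ∈ Finset.range p, ((p.choose (d+1) : ℚ_[p]⟦X⟧)) * (Ym p n) ^ d) * Ym p n := by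
        rw [Finset.sum_mul]
        refine Finset.sum_congr rfl fun d _ => ?_
        rw [pow_succ]
        ring

lemma choose_dvd_pow (m j : ℕ) (hj : 1 ≤ j) (hjm : j ≤ p ^ m) :
    p ^ (m - padicValNat p j) ∣ (p ^ m).choose j := by
  have hc0 : (p ^ m).choose j ≠ 0 := by simpa using Nat.choose_pos hjm |>.ne'
  have hj0 : j ≠ 0 := by omega
  have hkey : p ^ m * (p ^ m - 1).choose (j - 1) = (p ^ m).choose j * j := by
    have h := Nat.add_one_mul_choose_eq (p ^ m - 1) (j - 1)
    have e1 : p ^ m - 1 + 1 = p ^ m := Nat.succ_pred_eq_of_pos (pow_pos (Fact.out : p.Prime).pos m)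
    have e2 : j - 1 + 1 = j := by omega
    rwa [e1, e2] at h
  have hval : m ≤ padicValNat p ((p ^ m).choose j * j) :=
    (padicValNat_dvd_iff_le (by simp [hc0, hj0])).mp
      ⟨(p ^ m - 1).choose (j - 1), by rw [← hkey]⟩
  rw [padicValNat.mul hc0 hj0] at hval
  exact (padicValNat_dvd_iff_le hc0).mpr (by omega)

lemma key_ineq (l k : ℕ) (hl : 1 ≤ l) (hp2 : (2:ℝ) ≤ (p:ℝ)) :
    (k:ℝ) - l + 1 + 1/((p:ℝ)-1) ≤ (p:ℝ)^k * (1/((p:ℝ)^(l-1)*((p:ℝ)-1))) := by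
  set P : ℝ := (p:ℝ)
  have hP1 : (0:ℝ) < P - 1 := by simp only [P]; linarith
  have hpl : (0:ℝ) < P ^ (l-1) := by positivity
  rcases Nat.lt_or_ge k (l-1) with h | h
  · have hk2 : (k:ℝ) ≤ (l:ℝ) - 2 := by
      have : k + 2 ≤ l := by omega
      have := (Nat.cast_le (α := ℝ)).mpr this
      push_cast at this; linarith
    have h1 : 1/(P-1) ≤ 1 := by
      rw [div_le_one hP1]; linarith
    have h2 : (0:ℝ) < P^k * (1/(P^(l-1)*(P-1))) := by positivity
    linarith
  · obtain ⟨m, hm⟩ : ∃ m, k = (l-1) + m := ⟨k - (l-1), by omega⟩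
    have hkr : (k:ℝ) = (l:ℝ) - 1 + (m:ℝ) := by
      subst hm; push_cast [Nat.cast_sub hl]; ring
    have hbern : 1 + (m:ℝ) * (P - 1) ≤ P ^ m := by
      have := one_add_mul_le_pow (a := P - 1) (by linarith) m
      calc 1 + (m:ℝ)*(P-1) ≤ (1 + (P-1))^m := this
        _ = P ^ m := by ring_nf
    have hRHS : P^k * (1/(P^(l-1)*(P-1))) = P^m/(P-1) := by
      rw [hm, pow_add]
      field_simp
    rw [hRHS, hkr]
    rw [le_div_iff₀ hP1]
    have h1 : (1/(P-1))*(P-1) = 1 := by field_simp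
    nlinarith [hbern, h1]
lemma Nb_Ym (l n : ℕ) (hl : 1 ≤ l) (hn : l ≤ n) :
    Nb p (1/((p:ℝ)^(l-1)*((p:ℝ)-1))) ((n:ℝ) - l + 1/((p:ℝ)-1)) (Ym p n) := by
  intro j
  have hp2 : (2:ℝ) ≤ (p:ℝ) := by exact_mod_cast (Fact.out : p.Prime).two_le
  have hP1 : (0:ℝ) < (p:ℝ) - 1 := by linarith
  have hspos : (0:ℝ) < 1/((p:ℝ)^(l-1)*((p:ℝ)-1)) := by positivity
  have hppos : (0:ℝ) < (p:ℝ) := by linarith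
  rw [coeff_Ym]
  rcases eq_or_ne j 0 with rfl | hj0
  · simpa using (Real.rpow_pos_of_pos hppos _).le
  rw [if_neg hj0]
  by_cases hjm : p ^ (n-1) < j
  · rw [Nat.choose_eq_zero_of_lt hjm]
    simpa using (Real.rpow_pos_of_pos hppos _).le
  push_neg at hjm
  set k := padicValNat p j with hk
  have hpk : p ^ k ≤ j := Nat.le_of_dvd (by omega) pow_padicValNat_dvd
  have hkn : k ≤ n - 1 :=
    (Nat.pow_le_pow_iff_right (Fact.out : p.Prime).one_lt).mp (hpk.trans hjm)
  have hdvd := choose_dvd_pow (p := p) (n-1) j (by omega) hjm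
  have hnorm : ‖(((p^(n-1)).choose j : ℕ) : ℚ_[p])‖ ≤ (p:ℝ) ^ (-((n-1) - k : ℕ) : ℤ) := by
    have : ((((p^(n-1)).choose j : ℕ) : ℚ_[p])) = (((((p^(n-1)).choose j : ℕ)) : ℤ) : ℚ_[p]) := by
      push_cast; ring
    rw [this]
    refine (Padic.norm_int_le_pow_iff_dvd _ _).mpr ?_
    have := Int.natCast_dvd_natCast.mpr hdvd
    push_cast at this ⊢
    exact this
  refine hnorm.trans ?_
  rw [← Real.rpow_intCast (p:ℝ) (-((n-1) - k : ℕ) : ℤ)]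
  apply Real.rpow_le_rpow_of_exponent_le (by linarith)
  have hc1 : (((n-1) - k : ℕ) : ℝ) = (n:ℝ) - 1 - k := by
    have h1 : (1:ℕ) ≤ n := hl.trans hn
    push_cast [Nat.cast_sub hkn, Nat.cast_sub h1]
    ring
  have hjs : (p:ℝ)^k * (1/((p:ℝ)^(l-1)*((p:ℝ)-1))) ≤ (j:ℝ) * (1/((p:ℝ)^(l-1)*((p:ℝ)-1))) := by
    apply mul_le_mul_of_nonneg_right _ hspos.le
    exact_mod_cast Nat.cast_le.mpr hpk
  have hkey := key_ineq (p := p) l k hl hp2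
  push_cast [hc1]
  linarith

variable {p : ℕ} [Fact p.Prime]

/-- `w_n = 1 - φ_n/p` as a sum of `C(1/p · choose) * Y^(d+1)`. -/
lemma w_eq (n : ℕ) :
    1 - C (1/(p:ℚ_[p])) * phiPS p n =
      -∑ d ∈ Finset.range (p-1),
        C ((1/(p:ℚ_[p])) * (p.choose (d+2) : ℚ_[p])) * (Ym p n) ^ (d+1) := by
  have hp0 : (p:ℚ_[p]) ≠ 0 :=
    (Nat.cast_ne_zero (R := ℚ_[p])).mpr (Fact.out : p.Prime).ne_zero
  rw [phi_eq]
  have hsplit : ∑ d ∈ Finset.range p, ((p.choose (d+1) : ℚ_[p]⟦X⟧)) * (Ym p n) ^ d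
      = (∑ d ∈ Finset.range (p-1), ((p.choose (d+2) : ℚ_[p]⟦X⟧)) * (Ym p n) ^ (d+1))
        + (p : ℚ_[p]⟦X⟧) := by
    have h1 := Finset.sum_range_succ'
      (fun d => ((p.choose (d+1) : ℚ_[p]⟦X⟧)) * (Ym p n) ^ d) (p-1)
    have hpp : p - 1 + 1 = p := Nat.succ_pred_eq_of_pos (Fact.out : p.Prime).pos
    rw [hpp] at h1
    rw [h1]
    simp [Nat.choose_one_right]
  rw [hsplit, mul_add]
  have h2 : C (1/(p:ℚ_[p])) * (p : ℚ_[p]⟦X⟧) = 1 := by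
    rw [← map_natCast (C (R := ℚ_[p])) p, ← map_mul, one_div, inv_mul_cancel₀ hp0, map_one]
  rw [h2, Finset.mul_sum]
  have h3 : ∀ d ∈ Finset.range (p-1),
      C (1/(p:ℚ_[p])) * (((p.choose (d+2) : ℚ_[p]⟦X⟧)) * (Ym p n) ^ (d+1))
      = C ((1/(p:ℚ_[p])) * (p.choose (d+2) : ℚ_[p])) * (Ym p n) ^ (d+1) := by
    intro d _
    rw [map_mul, ← map_natCast (C (R := ℚ_[p])) (p.choose (d+2)), mul_assoc]
  rw [Finset.sum_congr rfl h3]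
  ring

lemma Nb_w (l n : ℕ) (hl : 1 ≤ l) (hn : l ≤ n) :
    Nb p (1/((p:ℝ)^(l-1)*((p:ℝ)-1))) (max 0 ((n:ℝ) - l - 1 + 1/((p:ℝ)^(l-1)*((p:ℝ)-1))))
      (1 - C (1/(p:ℚ_[p])) * phiPS p n) := by
  have hp2 : (2:ℝ) ≤ (p:ℝ) := by exact_mod_cast (Fact.out : p.Prime).two_le
  have hP1 : (0:ℝ) < (p:ℝ) - 1 := by linarith
  have hplpos : (0:ℝ) < (p:ℝ)^(l-1) := by positivity
  have hpl1 : (1:ℝ) ≤ (p:ℝ)^(l-1) := one_le_pow₀ (by linarith)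
  set s : ℝ := 1/((p:ℝ)^(l-1)*((p:ℝ)-1)) with hs
  have hspos : 0 < s := by positivity
  have hs1 : s ≤ 1 := by
    rw [hs, div_le_one (by positivity)]
    nlinarith
  set σ : ℝ := (n:ℝ) - l + 1/((p:ℝ)-1) with hσ
  have hinv : (0:ℝ) < 1/((p:ℝ)-1) := by positivity
  have hnl : (l:ℝ) ≤ (n:ℝ) := by exact_mod_cast hn
  have hσ0 : 0 ≤ σ := by rw [hσ]; linarith
  set γ : ℝ := max 0 ((n:ℝ) - l - 1 + s) with hγ
  have hγ0 : 0 ≤ γ := le_max_left _ _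
  have hγσ : γ ≤ σ := max_le hσ0 (by rw [hσ]; linarith)
  rw [w_eq]
  apply Nb_neg
  apply Nb_sum
  intro d hd
  have hYb : Nb p s σ (Ym p n) := Nb_Ym l n hl hn
  have hpow := Nb_pow hσ0 hYb (d+1)
  have hd1 : (1:ℝ) ≤ ((d+1 : ℕ) : ℝ) := by exact_mod_cast Nat.one_le_iff_ne_zero.mpr (by omega)
  by_cases hd2 : d = p - 2
  · have hdp : d + 2 = p := by
      have := (Fact.out : p.Prime).two_le; omega
    have hC : Nb p s (-1) (C ((1/(p:ℚ_[p])) * (p.choose (d+2) : ℚ_[p]))) := by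
      apply Nb_C
      rw [hdp, Nat.choose_self]
      have : ‖(1/(p:ℚ_[p])) * ((1:ℕ) : ℚ_[p])‖ = (p:ℝ) := by
        simp [one_div, norm_inv, Padic.norm_p]
      rw [this, neg_neg, Real.rpow_one]
    have hmul := Nb_mul hC hpow
    refine Nb_mono ?_ hmul
    have hdP : ((d+1 : ℕ) : ℝ) = (p:ℝ) - 1 := by
      have h1 : d + 1 = p - 1 := by have := (Fact.out : p.Prime).two_le; omega
      rw [h1]
      push_cast [Nat.cast_sub (Fact.out : p.Prime).one_lt.le]
      ring
    rw [hdP]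
    have hexp : ((p:ℝ)-1)*σ = ((p:ℝ)-1)*((n:ℝ)-(l:ℝ)) + 1 := by
      rw [hσ]; field_simp
    have hnn1 : (0:ℝ) ≤ ((p:ℝ)-1)*((n:ℝ)-(l:ℝ)) :=
      mul_nonneg (by linarith) (by linarith)
    have hnn2 : (0:ℝ) ≤ ((p:ℝ)-2)*((n:ℝ)-(l:ℝ)) :=
      mul_nonneg (by linarith) (by linarith)
    apply max_le
    · nlinarith
    · nlinarith
  · have hdlt : d + 2 < p := by
      have := Finset.mem_range.mp hd
      have := (Fact.out : p.Prime).two_le; omega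
    have hdvd : p ∣ p.choose (d+2) :=
      Nat.Prime.dvd_choose_self (Fact.out : p.Prime) (by omega) hdlt
    have hC : Nb p s 0 (C ((1/(p:ℚ_[p])) * (p.choose (d+2) : ℚ_[p]))) := by
      apply Nb_C
      rw [neg_zero, Real.rpow_zero, norm_mul]
      have h1 : ‖(1/(p:ℚ_[p]))‖ = (p:ℝ) := by
        simp [one_div, norm_inv, Padic.norm_p]
      have h2 : ‖((p.choose (d+2) : ℕ) : ℚ_[p])‖ ≤ (p:ℝ)⁻¹ := by
        have h3 : ((p:ℤ))^1 ∣ ((p.choose (d+2) : ℕ) : ℤ) := by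
          rw [pow_one]; exact_mod_cast hdvd
        have h4 := (Padic.norm_int_le_pow_iff_dvd
          ((p.choose (d+2) : ℕ) : ℤ) 1).mpr h3
        push_cast at h4
        rw [zpow_neg, zpow_one] at h4
        exact h4
      calc ‖(1/(p:ℚ_[p]))‖ * ‖((p.choose (d+2)) : ℚ_[p])‖
          ≤ (p:ℝ) * (p:ℝ)⁻¹ := by
            apply mul_le_mul _ _ (norm_nonneg _) (by linarith)
            · exact le_of_eq h1
            · exact_mod_cast h2
        _ = 1 := by field_simp
    have hmul := Nb_mul hC hpow
    refine Nb_mono ?_ hmul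
    have := mul_le_mul_of_nonneg_right hd1 hσ0
    nlinarith

lemma aux_geom {R : Type*} [CommRing R] (A : R) (m : ℕ) :
    1 - A ^ m = (∑ k ∈ Finset.range m, A ^ k) * (1 - A) := by
  linear_combination (geom_sum_mul A m)

lemma Nb_A (l n : ℕ) (hl : 1 ≤ l) (hn : l ≤ n) :
    Nb p (1/((p:ℝ)^(l-1)*((p:ℝ)-1))) 0 (C (1/(p:ℚ_[p])) * phiPS p n) := by
  have h1 : C (1/(p:ℚ_[p])) * phiPS p n
      = 1 - (1 - C (1/(p:ℚ_[p])) * phiPS p n) := by ring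
  rw [h1]
  exact Nb_sub Nb_one (Nb_mono (le_max_left _ _) (Nb_w l n hl hn))

/-- Bound for the first factor `1 - (φ_n/p)^(r+1)`. -/
lemma Nb_factor1 (l n r : ℕ) (hl : 1 ≤ l) (hn : l ≤ n) :
    Nb p (1/((p:ℝ)^(l-1)*((p:ℝ)-1)))
      (max 0 ((n:ℝ) - l - 1 + 1/((p:ℝ)^(l-1)*((p:ℝ)-1))))
      (1 - (C (1/(p:ℚ_[p])) * phiPS p n) ^ (r+1)) := by
  rw [aux_geom (C (1/(p:ℚ_[p])) * phiPS p n) (r+1)]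
  have hsum : Nb p (1/((p:ℝ)^(l-1)*((p:ℝ)-1))) 0
      (∑ k ∈ Finset.range (r+1), (C (1/(p:ℚ_[p])) * phiPS p n) ^ k) := by
    apply Nb_sum
    intro k _
    have := Nb_pow (hf := Nb_A (p := p) l n hl hn) (le_refl (0:ℝ)) k
    exact Nb_mono (le_of_eq (by simp)) this
  have := Nb_mul hsum (Nb_w l n hl hn)
  exact Nb_mono (le_of_eq (by simp)) this

/-- Bound for the product factors `1 - (1 - φ_i/p)^(r+1)`. -/
lemma Nb_factor2 (l i r : ℕ) (hl : 1 ≤ l) (hi : l ≤ i) :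
    Nb p (1/((p:ℝ)^(l-1)*((p:ℝ)-1))) 0
      (1 - (1 - C (1/(p:ℚ_[p])) * phiPS p i) ^ (r+1)) := by
  refine Nb_sub Nb_one ?_
  have h0 : (0:ℝ) ≤ max 0 ((i:ℝ) - l - 1 + 1/((p:ℝ)^(l-1)*((p:ℝ)-1))) := le_max_left _ _
  have := Nb_pow (hf := Nb_w (p := p) l i hl hi) h0 (r+1)
  refine Nb_mono ?_ this
  positivity

lemma Nb_Gpartial (l n r N : ℕ) (hl : 1 ≤ l) (hn : l ≤ n) :
    Nb p (1/((p:ℝ)^(l-1)*((p:ℝ)-1)))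
      (((r:ℝ)+1) * max 0 ((n:ℝ) - l - 1 + 1/((p:ℝ)^(l-1)*((p:ℝ)-1))) - n)
      (Gpartial p n r N) := by
  have hp2 : (2:ℝ) ≤ (p:ℝ) := by exact_mod_cast (Fact.out : p.Prime).two_le
  set s : ℝ := 1/((p:ℝ)^(l-1)*((p:ℝ)-1)) with hs
  set γ : ℝ := max 0 ((n:ℝ) - l - 1 + s) with hγ
  rw [Gpartial]
  have h1 := Nb_pow (hf := Nb_factor1 (p := p) l n r hl hn) (le_max_left _ _) (r+1)
  have h2 : Nb p s (-(n:ℝ)) (C (1 / (p : ℚ_[p]) ^ n)) := by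
    apply Nb_C
    have : ‖(1 / (p : ℚ_[p]) ^ n)‖ = (p:ℝ) ^ (n:ℕ) := by
      simp [one_div, norm_inv, norm_pow, Padic.norm_p]
    rw [this, neg_neg, ← Real.rpow_natCast (p:ℝ) n]
  have h3 : Nb p s 0 (∏ i ∈ Finset.Ioc n N,
      (1 - (1 - C (1/(p:ℚ_[p])) * phiPS p i) ^ (r+1)) ^ (r+1)) := by
    apply Nb_prod0
    intro i hi
    have hli : l ≤ i := le_trans hn (le_of_lt (Finset.mem_Ioc.mp hi).1)
    have := Nb_pow (hf := Nb_factor2 (p := p) l i r hl hli) (le_refl (0:ℝ)) (r+1)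
    exact Nb_mono (le_of_eq (by simp)) this
  have hall := Nb_mul (Nb_mul h1 h2) h3
  refine Nb_mono (le_of_eq ?_) hall
  push_cast
  ring
/-- For every `l ≥ 1` and all `n ≥ l`, `v_p(G_{n,r+1}(T), 1/φ(p^l)) > n·r - (r+1)·l - (r+1)`;
in particular `G_{n,r+1}(T) → 0` as `n → ∞` with respect to each valuation `v_p(·, 1/φ(p^l))`. -/
theorem stmt_9 (p : ℕ) [Fact p.Prime] (hodd : Odd p) (r : ℕ) (hr : 1 ≤ r)
    (G : ℕ → PowerSeries ℚ_[p])
    (hG : ∀ n, 1 ≤ n → ∀ m : ℕ,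
      Tendsto (fun N => PowerSeries.coeff m (Gpartial p n r N)) atTop
        (nhds (PowerSeries.coeff m (G n)))) :
    (∀ l : ℕ, 1 ≤ l → ∀ n : ℕ, l ≤ n → ∀ j : ℕ, PowerSeries.coeff j (G n) ≠ 0 →
      ((n : ℝ) * r - (r + 1) * l - (r + 1)) <
        ((PowerSeries.coeff j (G n)).valuation : ℝ) +
          (j : ℝ) * (1 / ((p : ℝ) ^ (l - 1) * ((p : ℝ) - 1)))) ∧
    (∀ l : ℕ, 1 ≤ l → ∀ C : ℝ, ∃ N : ℕ, ∀ n : ℕ, N ≤ n →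
      ∀ j : ℕ, PowerSeries.coeff j (G n) ≠ 0 →
        C ≤ ((PowerSeries.coeff j (G n)).valuation : ℝ) +
          (j : ℝ) * (1 / ((p : ℝ) ^ (l - 1) * ((p : ℝ) - 1)))) := by
  have hp2 : (2:ℝ) ≤ (p:ℝ) := by exact_mod_cast (Fact.out : p.Prime).two_le
  have hP1 : (0:ℝ) < (p:ℝ) - 1 := by linarith
  have hr1 : (1:ℝ) ≤ (r:ℝ) := by exact_mod_cast hr
  have main : ∀ l n : ℕ, 1 ≤ l → l ≤ n → ∀ j : ℕ, coeff j (G n) ≠ 0 →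
      ((r:ℝ)+1) * max 0 ((n:ℝ) - l - 1 + 1/((p:ℝ)^(l-1)*((p:ℝ)-1))) - n ≤
        ((coeff j (G n)).valuation : ℝ) +
          (j:ℝ) * (1/((p:ℝ)^(l-1)*((p:ℝ)-1))) := by
    intro l n hl hn j hj
    have hGb : ‖coeff j (G n)‖ ≤ (p:ℝ) ^
        ((j:ℝ) * (1/((p:ℝ)^(l-1)*((p:ℝ)-1))) -
          (((r:ℝ)+1) * max 0 ((n:ℝ) - l - 1 + 1/((p:ℝ)^(l-1)*((p:ℝ)-1))) - n)) := by
      refine le_of_tendsto ((hG n (hl.trans hn) j).norm) (Eventually.of_forall fun N => ?_)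
      exact Nb_Gpartial (p := p) l n r N hl hn j
    rw [Padic.norm_eq_zpow_neg_valuation hj,
      show ((p:ℝ) ^ (-(coeff j (G n)).valuation)) =
        (p:ℝ) ^ ((-(coeff j (G n)).valuation : ℤ) : ℝ)
        from (Real.rpow_intCast _ _).symm] at hGb
    have h2 := (Real.rpow_le_rpow_left_iff (by linarith : (1:ℝ) < (p:ℝ))).mp hGb
    push_cast at h2 ⊢
    linarith
  constructor
  · intro l hl n hn j hj
    have h := main l n hl hn j hj
    have hplpos : (0:ℝ) < (p:ℝ)^(l-1) := by positivity
    have hsp : (0:ℝ) < 1/((p:ℝ)^(l-1)*((p:ℝ)-1)) := by positivity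
    have e1 : ((r:ℝ)+1) * ((n:ℝ)-l-1+1/((p:ℝ)^(l-1)*((p:ℝ)-1))) ≤
        ((r:ℝ)+1) * max 0 ((n:ℝ)-l-1+1/((p:ℝ)^(l-1)*((p:ℝ)-1))) :=
      mul_le_mul_of_nonneg_left (le_max_right _ _) (by positivity)
    have e2 : (0:ℝ) < ((r:ℝ)+1) * (1/((p:ℝ)^(l-1)*((p:ℝ)-1))) := by positivity
    nlinarith [h, e1, e2]
  · intro l hl C
    refine ⟨max l ⌈C + ((r:ℝ)+1) * ((l:ℝ)+1)⌉₊, fun n hn j hj => ?_⟩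
    have hln : l ≤ n := le_trans (le_max_left _ _) hn
    have h := main l n hl hln j hj
    have hCn : C + ((r:ℝ)+1) * ((l:ℝ)+1) ≤ (n:ℝ) :=
      Nat.ceil_le.mp (le_trans (le_max_right _ _) hn)
    have hplpos : (0:ℝ) < (p:ℝ)^(l-1) := by positivity
    have hsp : (0:ℝ) < 1/((p:ℝ)^(l-1)*((p:ℝ)-1)) := by positivity
    have e1 : ((r:ℝ)+1) * ((n:ℝ)-l-1+1/((p:ℝ)^(l-1)*((p:ℝ)-1))) ≤
        ((r:ℝ)+1) * max 0 ((n:ℝ)-l-1+1/((p:ℝ)^(l-1)*((p:ℝ)-1))) :=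
      mul_le_mul_of_nonneg_left (le_max_right _ _) (by positivity)
    have e2 : (0:ℝ) ≤ ((r:ℝ)+1) * (1/((p:ℝ)^(l-1)*((p:ℝ)-1))) := by positivity
    have e3 : (0:ℝ) ≤ ((r:ℝ)-1) * (n:ℝ) :=
      mul_nonneg (by linarith) (Nat.cast_nonneg n)
    nlinarith [h, e1, e2, e3, hCn]
end

section
/- Let τ_n = v_p((a_n^2 - B_n·p^r)/(p·a_n)) where a_n = p^{r/2}(1 + L·p^n(p-1)/2), B_n = (k_n - 2 - v_- choose v_+)·(k_n - 2 - v_+ choose v_-), k_n = k + p^n(p-1), r = k-2, and v_- + v_+ = r. If L ≠ H_- + H_+, then for all sufficiently large n, τ_n = r/2 - 1 + n + v_p(L - H_- - H_+), where H_± = Σ_{i=1}^{v_±} 1/i. -/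
open Filter IsUltrametricDist

lemma aux_norm_add_eq_left {E : Type*} [NormedField E] [IsUltrametricDist E] {x y : E}
    (h : ‖y‖ < ‖x‖) : ‖x + y‖ = ‖x‖ := by
  have := norm_add_eq_max_of_norm_ne_norm (x := x) (y := y) (ne_of_gt h)
  rw [this, max_eq_left h.le]

lemma aux_choose_prod (v : ℕ) : ∀ M : ℕ,
    ((v + M).choose v : ℚ) = ∏ i ∈ Finset.Icc 1 v, (1 + (M:ℚ)/i) := by
  induction v with
  | zero => intro M; simp
  | succ v ih =>
    intro M
    have key := Nat.add_one_mul_choose_eq (v + M) v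
    have h1 : ((v + M + 1 : ℕ) : ℚ) * ((v + M).choose v : ℚ)
        = ((v + M + 1).choose (v+1) : ℚ) * (v + 1) := by
      exact_mod_cast congrArg (Nat.cast : ℕ → ℚ) key
    have hIcc : Finset.Icc 1 (v+1) = insert (v+1) (Finset.Icc 1 v) := by
      rw [← Finset.insert_Icc_right_eq_Icc_add_one (by omega)]
    rw [show v + 1 + M = v + M + 1 by ring]
    have hv1 : ((v:ℚ) + 1) ≠ 0 := by positivity
    rw [hIcc, Finset.prod_insert (by simp), ← ih M]
    have : ((v + M + 1).choose (v+1) : ℚ)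
        = ((v + M + 1 : ℕ) : ℚ) * ((v + M).choose v : ℚ) / (v+1) := by
      rw [h1]; field_simp
    rw [this]
    push_cast
    field_simp
    ring_nf

lemma aux_prod_expand {E : Type*} [NormedField E] [IsUltrametricDist E] (x : E) (hx : ‖x‖ ≤ 1)
    (S : Finset ℕ) (hS : ∀ i ∈ S, ‖(i:E)‖ = 1) :
    ‖∏ i ∈ S, (1 + x * (i:E)⁻¹) - 1 - x * ∑ i ∈ S, ((i:E))⁻¹‖ ≤ ‖x‖^2 ∧
    ‖∏ i ∈ S, (1 + x * (i:E)⁻¹) - 1‖ ≤ ‖x‖ := by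
  classical
  induction S using Finset.induction with
  | empty => simp
  | insert _ _ hj =>
    rename_i j S ih
    have hS' : ∀ i ∈ S, ‖(i:E)‖ = 1 := fun i hi => hS i (Finset.mem_insert_of_mem hi)
    obtain ⟨ih1, ih2⟩ := ih hS'
    have hj1 : ‖(j:E)‖ = 1 := hS j (Finset.mem_insert_self j S)
    have hjinv : ‖(j:E)⁻¹‖ = 1 := by rw [norm_inv, hj1, inv_one]
    have hH : ‖∑ i ∈ S, ((i:E))⁻¹‖ ≤ 1 :=
      norm_sum_le_of_forall_le_of_nonneg zero_le_one
        (fun i hi => by rw [norm_inv, hS' i hi, inv_one])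
    rw [Finset.prod_insert hj, Finset.sum_insert hj]
    set P := ∏ i ∈ S, (1 + x * (i:E)⁻¹) with hP
    set H := ∑ i ∈ S, ((i:E))⁻¹ with hHdef
    have key : (1 + x * (j:E)⁻¹) * P - 1 - x * ((j:E)⁻¹ + H)
        = (P - 1 - x * H) + (x * (j:E)⁻¹) * (P - 1) := by ring
    have hfirst : ‖(1 + x * (j:E)⁻¹) * P - 1 - x * ((j:E)⁻¹ + H)‖ ≤ ‖x‖^2 := by
      rw [key]
      refine le_trans (norm_add_le_max _ _) (max_le ih1 ?_)
      rw [norm_mul, norm_mul, hjinv, mul_one]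
      calc ‖x‖ * ‖P - 1‖ ≤ ‖x‖ * ‖x‖ := mul_le_mul_of_nonneg_left ih2 (norm_nonneg _)
        _ = ‖x‖^2 := (sq ‖x‖).symm
    refine ⟨hfirst, ?_⟩
    have : (1 + x * (j:E)⁻¹) * P - 1
        = ((1 + x * (j:E)⁻¹) * P - 1 - x * ((j:E)⁻¹ + H)) + x * ((j:E)⁻¹ + H) := by ring
    rw [this]
    refine le_trans (norm_add_le_max _ _) (max_le ?_ ?_)
    · calc ‖(1 + x * (j:E)⁻¹) * P - 1 - x * ((j:E)⁻¹ + H)‖ ≤ ‖x‖^2 := hfirst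
        _ = ‖x‖ * ‖x‖ := sq ‖x‖
        _ ≤ 1 * ‖x‖ := mul_le_mul_of_nonneg_right hx (norm_nonneg _)
        _ = ‖x‖ := one_mul _
    · rw [norm_mul]
      have hle : ‖(j:E)⁻¹ + H‖ ≤ 1 := le_trans (norm_add_le_max _ _) (max_le (le_of_eq hjinv) hH)
      calc ‖x‖ * ‖(j:E)⁻¹ + H‖ ≤ ‖x‖ * 1 := mul_le_mul_of_nonneg_left hle (norm_nonneg _)
        _ = ‖x‖ := mul_one _

/-- Let `τ_n = v_p((a_n² - B_n·p^r)/(p·a_n))` with `a_n = p^{r/2}(1 + L·p^n(p-1)/2)`,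
`B_n = (k_n-2-v_- choose v_+)·(k_n-2-v_+ choose v_-)`, `k_n = k + p^n(p-1)`, `r = k-2`.
If `L ≠ H_- + H_+`, then for all sufficiently large `n`,
`τ_n = r/2 - 1 + n + v_p(L - H_- - H_+)`.  The valuation on the finite extension `E`
of `ℚ_p` is expressed as `v_p(x) = -log_p ‖x‖`. -/
theorem stmt_16 (p k : ℕ) [Fact p.Prime] (hodd : Odd p) (hk3 : 3 ≤ k) (hkp : k ≤ p + 1)
    (E : Type*) [NormedField E] [NormedAlgebra ℚ_[p] E] [FiniteDimensional ℚ_[p] E]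
    (hiso : ∀ q : ℚ_[p], ‖algebraMap ℚ_[p] E q‖ = ‖q‖)
    (vminus vplus : ℕ)
    (h1 : (vminus : ℚ) < ((k : ℚ) - 2) / 2) (h2 : ((k : ℚ) - 2) / 2 ≤ (vminus : ℚ) + 1)
    (h3 : ((k : ℚ) - 2) / 2 < (vplus : ℚ)) (h4 : (vplus : ℚ) ≤ ((k : ℚ) - 2) / 2 + 1)
    (L s : E) (hs : s ^ 2 = (p : E) ^ (k - 2))
    (hL : L ≠ (((∑ i ∈ Finset.Icc 1 vminus, (1 : ℚ) / i) +
      (∑ i ∈ Finset.Icc 1 vplus, (1 : ℚ) / i) : ℚ) : E))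
    (a B : ℕ → E)
    (ha : ∀ n, a n = s * (1 + L * (p : E) ^ n * ((p : E) - 1) / 2))
    (hB : ∀ n, B n =
      ((Nat.choose (k + p ^ n * (p - 1) - 2 - vminus) vplus *
        Nat.choose (k + p ^ n * (p - 1) - 2 - vplus) vminus : ℕ) : E)) :
    ∀ᶠ n in atTop,
      -Real.logb p ‖(a n ^ 2 - B n * (p : E) ^ (k - 2)) / ((p : E) * a n)‖ =
        ((k : ℝ) - 2) / 2 - 1 + (n : ℝ) +
          (-Real.logb p ‖L - (((∑ i ∈ Finset.Icc 1 vminus, (1 : ℚ) / i) +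
            (∑ i ∈ Finset.Icc 1 vplus, (1 : ℚ) / i) : ℚ) : E)‖) := by
  have hp : p.Prime := Fact.out
  have hp3 : 3 ≤ p := by
    rcases hp.eq_two_or_odd' with h | _
    · exact absurd (h ▸ hodd) (by decide)
    · have := hp.two_le
      rcases Nat.lt_or_ge p 3 with h | h
      · interval_cases p
        · exact absurd hodd (by decide)
      · exact h
  haveI : CharZero E := charZero_of_injective_algebraMap (algebraMap ℚ_[p] E).injective
  -- norms of casts
  have hnormnat : ∀ m : ℕ, ‖(m : E)‖ = ‖(m : ℚ_[p])‖ := fun m => by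
    rw [← map_natCast (algebraMap ℚ_[p] E) m, hiso]
  have hnormrat : ∀ q : ℚ, ‖(q : E)‖ = ‖(q : ℚ_[p])‖ := fun q => by
    rw [← map_ratCast (algebraMap ℚ_[p] E) q, hiso]
  haveI ult : IsUltrametricDist E := by
    apply isUltrametricDist_of_forall_norm_natCast_le_one
    intro m
    rw [hnormnat]
    have := Padic.norm_int_le_one (p := p) (m : ℤ)
    simpa using this
  have hpR1 : (1:ℝ) < (p:ℝ) := by exact_mod_cast hp.one_lt
  have hpR0 : (0:ℝ) < (p:ℝ) := by positivity
  have hpE : ‖(p : E)‖ = (p:ℝ)⁻¹ := by rw [hnormnat]; exact Padic.norm_p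
  -- norm one for naturals not divisible by p
  have hunit : ∀ m : ℕ, 0 < m → ¬ p ∣ m → ‖(m : E)‖ = 1 := by
    intro m hm hdvd
    rw [hnormnat]
    have hle : ‖(m : ℚ_[p])‖ ≤ 1 := by
      have := Padic.norm_int_le_one (p := p) (m : ℤ)
      simpa using this
    have hnlt : ¬ ‖(m : ℚ_[p])‖ < 1 := by
      have := (Padic.norm_intCast_lt_one_iff (p := p) (k := (m : ℤ)))
      intro hcon
      have : ((p:ℤ)) ∣ (m:ℤ) := this.mp (by simpa using hcon)
      exact hdvd (by exact_mod_cast this)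
    rcases lt_or_eq_of_le hle with h | h
    · exact absurd h hnlt
    · exact h
  -- integer versions of the rational hypotheses
  have e1 : 2*vminus + 2 < k := by
    have : ((2*vminus + 2 : ℕ) : ℚ) < (k:ℚ) := by push_cast; linarith
    exact_mod_cast this
  have e2 : k ≤ 2*vminus + 4 := by
    have : ((k:ℕ) : ℚ) ≤ ((2*vminus + 4 : ℕ) : ℚ) := by push_cast; linarith
    exact_mod_cast this
  have e3 : k < 2*vplus + 2 := by
    have : ((k:ℕ) : ℚ) < ((2*vplus + 2 : ℕ) : ℚ) := by push_cast; linarith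
    exact_mod_cast this
  have e4 : 2*vplus ≤ k := by
    have : ((2*vplus : ℕ) : ℚ) ≤ ((k:ℕ) : ℚ) := by push_cast; linarith
    exact_mod_cast this
  have hsum : vminus + vplus = k - 2 := by omega
  have hvp : vplus < p := by omega
  have hvm : vminus < p := by omega
  -- norm-one facts
  have hIccunit : ∀ v : ℕ, v < p → ∀ i ∈ Finset.Icc 1 v, ‖(i:E)‖ = 1 := by
    intro v hv i hi
    rw [Finset.mem_Icc] at hi
    exact hunit i (by omega) (fun hdvd => by
      have := Nat.le_of_dvd (by omega) hdvd; omega)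
  have h2unit : ‖(2:E)‖ = 1 := by
    have := hunit 2 (by omega) (fun h => by have := Nat.le_of_dvd (by norm_num) h; omega)
    simpa using this
  have h4unit : ‖(4:E)‖ = 1 := by
    have : ¬ p ∣ 4 := by
      intro h
      obtain ⟨t, ht⟩ := hodd
      have := Nat.le_of_dvd (by norm_num) h
      interval_cases p <;> omega
    have := hunit 4 (by omega) this
    simpa using this
  have hpm1 : ‖(p:E) - 1‖ = 1 := by
    have : (p:E) - 1 = (-1) + (p:E) := by ring
    rw [this, aux_norm_add_eq_left (by rw [hpE, norm_neg, norm_one]; exact inv_lt_one_of_one_lt₀ hpR1),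
      norm_neg, norm_one]
  -- the sums
  set Hm : E := ∑ i ∈ Finset.Icc 1 vminus, ((i:E))⁻¹ with hHm
  set Hp' : E := ∑ i ∈ Finset.Icc 1 vplus, ((i:E))⁻¹ with hHp'
  set D : E := L - (Hm + Hp') with hDdef
  have hHcast : (((∑ i ∈ Finset.Icc 1 vminus, (1 : ℚ) / i) +
      (∑ i ∈ Finset.Icc 1 vplus, (1 : ℚ) / i) : ℚ) : E) = Hm + Hp' := by
    rw [hHm, hHp']
    push_cast [one_div]
    ring
  have hD : D ≠ 0 := by
    rw [hDdef, sub_ne_zero, ← hHcast]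
    exact hL
  have hDpos : (0:ℝ) < ‖D‖ := norm_pos_iff.mpr hD
  -- norm of s
  have hsR : ‖s‖ = (p:ℝ) ^ (-(((k:ℝ)-2)/2)) := by
    have hkc : ((k - 2 : ℕ) : ℝ) = (k:ℝ) - 2 := by
      rw [Nat.cast_sub (by omega)]; norm_num
    have hsq : ‖s‖^2 = ((p:ℝ) ^ (-(((k:ℝ)-2)/2)))^2 := by
      rw [← norm_pow, hs, norm_pow, hpE, ← Real.rpow_natCast ((p:ℝ) ^ (-(((k:ℝ)-2)/2))) 2,
        ← Real.rpow_mul hpR0.le, ← Real.rpow_natCast ((p:ℝ)⁻¹) (k-2), ← Real.rpow_neg_one (p:ℝ),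
        ← Real.rpow_mul hpR0.le, hkc]
      ring_nf
    have := congrArg Real.sqrt hsq
    rwa [Real.sqrt_sq (norm_nonneg s), Real.sqrt_sq (Real.rpow_nonneg hpR0.le _)] at this
  have hkc : ((k - 2 : ℕ) : ℝ) = (k:ℝ) - 2 := by
    rw [Nat.cast_sub (by omega)]; norm_num
  -- choose as product, cast to E
  have hchoose : ∀ (v X : ℕ), (((v + X).choose v : ℕ) : E)
      = ∏ i ∈ Finset.Icc 1 v, (1 + (X:E) * (i:E)⁻¹) := by
    intro v X
    rw [show (((v + X).choose v : ℕ) : E) = ((((v + X).choose v : ℕ) : ℚ) : E) by norm_cast,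
      aux_choose_prod v X]
    push_cast [div_eq_mul_inv]
    ring
  have hidx1 : ∀ X : ℕ, k + X - 2 - vminus = vplus + X := fun X => by omega
  have hidx2 : ∀ X : ℕ, k + X - 2 - vplus = vminus + X := fun X => by omega
  -- eventual bounds
  set C : ℝ := max (‖L‖^2) 1 with hC
  have hC1 : (1:ℝ) ≤ C := le_max_right _ _
  have hC0 : (0:ℝ) < C := by positivity
  have htend : Tendsto (fun n : ℕ => ((p:ℝ)⁻¹)^n) atTop (nhds 0) :=
    tendsto_pow_atTop_nhds_zero_of_lt_one (by positivity) (inv_lt_one_of_one_lt₀ hpR1)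
  have hev1 : ∀ᶠ n : ℕ in atTop, ((p:ℝ)⁻¹)^n < ‖D‖/C :=
    htend.eventually (gt_mem_nhds (by positivity))
  have hev2 : ∀ᶠ n : ℕ in atTop, ((p:ℝ)⁻¹)^n < (‖L‖+1)⁻¹ :=
    htend.eventually (gt_mem_nhds (by positivity))
  filter_upwards [hev1, hev2] with n hn1 hn2
  rw [hHcast, ← hDdef]
  -- setup for fixed n
  set Mn : E := (p:E)^n * ((p:E) - 1) with hMndef
  have hXE : ((p ^ n * (p - 1) : ℕ) : E) = Mn := by
    rw [hMndef, Nat.cast_mul, Nat.cast_pow, Nat.cast_sub hp.one_le, Nat.cast_one]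
  have hMnorm : ‖Mn‖ = ((p:ℝ)⁻¹)^n := by
    rw [hMndef, norm_mul, norm_pow, hpE, hpm1, mul_one]
  have hMle : ‖Mn‖ ≤ 1 := by
    rw [hMnorm]
    exact pow_le_one₀ (by positivity) (inv_le_one_of_one_le₀ hpR1.le)
  have hMpos : (0:ℝ) < ‖Mn‖ := by
    rw [hMnorm]; positivity
  -- rewrite B n
  have hBn : B n = (∏ i ∈ Finset.Icc 1 vplus, (1 + Mn * (i:E)⁻¹)) *
      (∏ i ∈ Finset.Icc 1 vminus, (1 + Mn * (i:E)⁻¹)) := by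
    rw [hB n, hidx1, hidx2, Nat.cast_mul, hchoose, hchoose, hXE]
  -- error bounds
  obtain ⟨hpl1, hpl2⟩ := aux_prod_expand Mn hMle (Finset.Icc 1 vplus) (hIccunit vplus hvp)
  obtain ⟨hmi1, hmi2⟩ := aux_prod_expand Mn hMle (Finset.Icc 1 vminus) (hIccunit vminus hvm)
  rw [← hHp'] at hpl1
  rw [← hHm] at hmi1
  have hBerr : ‖B n - 1 - Mn * (Hp' + Hm)‖ ≤ ‖Mn‖^2 := by
    rw [hBn]
    have hid : (∏ i ∈ Finset.Icc 1 vplus, (1 + Mn * (i:E)⁻¹)) *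
        (∏ i ∈ Finset.Icc 1 vminus, (1 + Mn * (i:E)⁻¹)) - 1 - Mn * (Hp' + Hm)
      = ((∏ i ∈ Finset.Icc 1 vplus, (1 + Mn * (i:E)⁻¹)) - 1 - Mn * Hp')
        + (((∏ i ∈ Finset.Icc 1 vminus, (1 + Mn * (i:E)⁻¹)) - 1 - Mn * Hm)
          + ((∏ i ∈ Finset.Icc 1 vplus, (1 + Mn * (i:E)⁻¹)) - 1)
            * ((∏ i ∈ Finset.Icc 1 vminus, (1 + Mn * (i:E)⁻¹)) - 1)) := by ring
    rw [hid]
    refine le_trans (norm_add_le_max _ _) (max_le hpl1 ?_)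
    refine le_trans (norm_add_le_max _ _) (max_le hmi1 ?_)
    rw [norm_mul, sq]
    exact mul_le_mul hpl2 hmi2 (norm_nonneg _) (norm_nonneg _)
  set En : E := L^2*Mn^2/4 - (B n - 1 - Mn*(Hp' + Hm)) with hEn
  have hnum : a n ^ 2 - B n * (p:E)^(k-2) = (p:E)^(k-2) * (Mn * D + En) := by
    rw [ha n, mul_pow, hs, hEn, hDdef, hMndef]
    ring
  have hEnorm : ‖En‖ ≤ C * ‖Mn‖^2 := by
    rw [hEn, sub_eq_add_neg]
    refine le_trans (norm_add_le_max _ _) (max_le ?_ ?_)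
    · rw [norm_div, norm_mul, norm_pow, norm_pow, h4unit, div_one]
      exact mul_le_mul_of_nonneg_right (le_max_left _ _) (by positivity)
    · rw [norm_neg]
      calc ‖B n - 1 - Mn * (Hp' + Hm)‖ ≤ ‖Mn‖^2 := hBerr
        _ = 1 * ‖Mn‖^2 := (one_mul _).symm
        _ ≤ C * ‖Mn‖^2 := mul_le_mul_of_nonneg_right hC1 (by positivity)
  have hdom : ‖En‖ < ‖Mn * D‖ := by
    rw [norm_mul]
    calc ‖En‖ ≤ C * ‖Mn‖^2 := hEnorm
      _ = ‖Mn‖ * (C * ‖Mn‖) := by ring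
      _ < ‖Mn‖ * ‖D‖ := by
          refine mul_lt_mul_of_pos_left ?_ hMpos
          rw [hMnorm]
          calc C * ((p:ℝ)⁻¹)^n < C * (‖D‖/C) := mul_lt_mul_of_pos_left hn1 hC0
            _ = ‖D‖ := by field_simp
  have hkey : ‖Mn * D + En‖ = ‖Mn‖ * ‖D‖ := by
    rw [aux_norm_add_eq_left hdom, norm_mul]
  have hnorm_num : ‖a n ^ 2 - B n * (p:E)^(k-2)‖
      = (((p:ℝ)⁻¹)^(k-2) * ((p:ℝ)⁻¹)^n) * ‖D‖ := by
    rw [hnum, norm_mul, norm_pow, hpE, hkey, hMnorm]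
    ring
  -- denominator
  have hone : ‖(1:E) + L * (p:E)^n * ((p:E)-1)/2‖ = 1 := by
    have hsmall : ‖L * (p:E)^n * ((p:E)-1)/2‖ < 1 := by
      rw [norm_div, h2unit, div_one, show L * (p:E)^n * ((p:E)-1) = L * Mn by
        rw [hMndef]; ring, norm_mul, hMnorm]
      calc ‖L‖ * ((p:ℝ)⁻¹)^n ≤ (‖L‖+1) * ((p:ℝ)⁻¹)^n := by
            refine mul_le_mul_of_nonneg_right (by linarith) (by positivity)
        _ < (‖L‖+1) * (‖L‖+1)⁻¹ := mul_lt_mul_of_pos_left hn2 (by positivity)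
        _ = 1 := by field_simp
    rw [aux_norm_add_eq_left (by rw [norm_one]; exact hsmall), norm_one]
  have hnorm_den : ‖(p:E) * a n‖ = (p:ℝ)⁻¹ * ((p:ℝ) ^ (-(((k:ℝ)-2)/2))) := by
    rw [norm_mul, ha n, norm_mul, hone, mul_one, hpE, hsR]
  -- total norm
  have cv : ∀ m : ℕ, ((p:ℝ)⁻¹)^m = (p:ℝ) ^ (-(m:ℝ)) := fun m => by
    rw [Real.rpow_neg hpR0.le, Real.rpow_natCast, inv_pow]
  have hq : ‖(a n ^ 2 - B n * (p : E) ^ (k - 2)) / ((p : E) * a n)‖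
      = ‖D‖ * (p:ℝ) ^ (-(((k:ℝ)-2)/2 - 1 + (n:ℝ))) := by
    rw [norm_div, hnorm_num, hnorm_den, cv, cv, hkc,
      show (p:ℝ)⁻¹ = (p:ℝ) ^ (-1:ℝ) by rw [Real.rpow_neg_one],
      ← Real.rpow_add hpR0, ← Real.rpow_add hpR0, mul_comm _ ‖D‖, mul_div_assoc,
      ← Real.rpow_sub hpR0]
    congr 1
    ring
  rw [hq, Real.logb_mul (ne_of_gt hDpos) (Real.rpow_pos_of_pos hpR0 _).ne',
    Real.logb_rpow hpR0 (ne_of_gt hpR1)]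
  ring
end
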